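/- arXiv:1708.05496 — 2 statements merged into one kernel-verified Lean document; each statement's English description precedes it below -/
import Mathlib

section
/- Fix a pair of test channels (P*_{X̂₁|XY}, P*_{X̂₂|XYX̂₁}) achieving R_K(P_{XY},D₁,D₂), with induced marginals P*_{X̂₁} and P*_{X̂₂|YX̂₁}, and write α₂(x,y,x̂₁) := α₂(x,y,x̂₁|P*_{X̂₂|YX̂₁}) and α(x,y) := α(x,y|P*_{X̂₁},P*_{X̂₂|YX̂₁}). Define ν₁(x̂₁) := E_{P_{XY}}[ (α(X,Y)/α₂(X,Y,x̂₁)) exp(−λ₁* d₁(X,x̂₁)) ] and, for any conditional pmf Q_{X̂₂|YX̂₁}, ν₂(x̂₁, Q_{X̂₂|YX̂₁}) := Σ_{x,y,x̂₂} P_{XY}(x,y) Q_{X̂₂|YX̂₁}(x̂₂|y,x̂₁) α(x,y) exp(−λ₁* d₁(x,x̂₁) − λ₂* d₂(x,x̂₂)). Then for every x̂₁ ∈ 𝒳̂₁ and every conditional pmf Q_{X̂₂|YX̂₁}: ν₁(x̂₁) ≤ 1 and ν₂(x̂₁, Q_{X̂₂|YX̂₁}) ≤ 1. -/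
open scoped BigOperators Classical
open Finset

namespace Kaspi

/-- A probability mass function on a finite type. -/
def IsPMF {α : Type*} [Fintype α] (p : α → ℝ) : Prop :=
  (∀ a, 0 ≤ p a) ∧ ∑ a, p a = 1

variable {X Y X1 X2 : Type*} [Fintype X] [Fintype Y] [Fintype X1] [Fintype X2]

/-- A joint probability mass function on `X × Y` (curried). -/
def IsPMF2 (P : X → Y → ℝ) : Prop :=
  (∀ x y, 0 ≤ P x y) ∧ ∑ x, ∑ y, P x y = 1

/-- A test channel `P_{X̂₁|XY}`. -/
def IsChan1 (W : X → Y → X1 → ℝ) : Prop := ∀ x y, IsPMF (W x y)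

/-- A test channel `P_{X̂₂|XYX̂₁}`. -/
def IsChan2 (W : X → Y → X1 → X2 → ℝ) : Prop := ∀ x y a, IsPMF (W x y a)

/-- Induced reproduction marginal `P_{X̂₁}`. -/
noncomputable def pA (P : X → Y → ℝ) (W1 : X → Y → X1 → ℝ) (a : X1) : ℝ :=
  ∑ x, ∑ y, P x y * W1 x y a

/-- Induced joint marginal `P_{Y X̂₁}`. -/
noncomputable def pYA (P : X → Y → ℝ) (W1 : X → Y → X1 → ℝ) (y : Y) (a : X1) : ℝ :=
  ∑ x, P x y * W1 x y a

/-- Induced conditional `P_{X̂₂|Y X̂₁}`. -/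
noncomputable def pBgYA (P : X → Y → ℝ) (W1 : X → Y → X1 → ℝ) (W2 : X → Y → X1 → X2 → ℝ)
    (y : Y) (a : X1) (b : X2) : ℝ :=
  (∑ x, P x y * W1 x y a * W2 x y a b) / pYA P W1 y a

/-- Mutual information `I(X,Y; X̂₁)`. -/
noncomputable def I1 (P : X → Y → ℝ) (W1 : X → Y → X1 → ℝ) : ℝ :=
  ∑ x, ∑ y, ∑ a, P x y * W1 x y a * Real.log (W1 x y a / pA P W1 a)

/-- Conditional mutual information `I(X; X̂₂ | Y, X̂₁)`. -/
noncomputable def I2 (P : X → Y → ℝ) (W1 : X → Y → X1 → ℝ) (W2 : X → Y → X1 → X2 → ℝ) : ℝ :=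
  ∑ x, ∑ y, ∑ a, ∑ b,
    P x y * W1 x y a * W2 x y a b * Real.log (W2 x y a b / pBgYA P W1 W2 y a b)

/-- Expected first distortion. -/
noncomputable def Ed1 (P : X → Y → ℝ) (W1 : X → Y → X1 → ℝ) (d1 : X → X1 → ℝ) : ℝ :=
  ∑ x, ∑ y, ∑ a, P x y * W1 x y a * d1 x a

/-- Expected second distortion. -/
noncomputable def Ed2 (P : X → Y → ℝ) (W1 : X → Y → X1 → ℝ) (W2 : X → Y → X1 → X2 → ℝ)
    (d2 : X → X2 → ℝ) : ℝ :=
  ∑ x, ∑ y, ∑ a, ∑ b, P x y * W1 x y a * W2 x y a b * d2 x b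

/-- The Kaspi rate-distortion function `R_K(P_{XY}, D₁, D₂)`. -/
noncomputable def RK (P : X → Y → ℝ) (d1 : X → X1 → ℝ) (d2 : X → X2 → ℝ) (D1 D2 : ℝ) : ℝ :=
  sInf { r | ∃ (W1 : X → Y → X1 → ℝ) (W2 : X → Y → X1 → X2 → ℝ),
    IsChan1 W1 ∧ IsChan2 W2 ∧ Ed1 P W1 d1 ≤ D1 ∧ Ed2 P W1 W2 d2 ≤ D2 ∧
    r = I1 P W1 + I2 P W1 W2 }

/-- `(W1, W2)` is a feasible pair achieving `R_K(P, D₁, D₂)`. -/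
def Achieves (P : X → Y → ℝ) (d1 : X → X1 → ℝ) (d2 : X → X2 → ℝ) (D1 D2 : ℝ)
    (W1 : X → Y → X1 → ℝ) (W2 : X → Y → X1 → X2 → ℝ) : Prop :=
  IsChan1 W1 ∧ IsChan2 W2 ∧ Ed1 P W1 d1 ≤ D1 ∧ Ed2 P W1 W2 d2 ≤ D2 ∧
    I1 P W1 + I2 P W1 W2 = RK P d1 d2 D1 D2

/-- `(λ₁, λ₂)` are dual-optimal multipliers for `R_K(P, D₁, D₂)`. -/
def DualOpt (P : X → Y → ℝ) (d1 : X → X1 → ℝ) (d2 : X → X2 → ℝ) (D1 D2 l1 l2 : ℝ) : Prop :=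
  0 ≤ l1 ∧ 0 ≤ l2 ∧
  RK P d1 d2 D1 D2 = sInf { r | ∃ (W1 : X → Y → X1 → ℝ) (W2 : X → Y → X1 → X2 → ℝ),
    IsChan1 W1 ∧ IsChan2 W2 ∧
    r = I1 P W1 + I2 P W1 W2 + l1 * (Ed1 P W1 d1 - D1) + l2 * (Ed2 P W1 W2 d2 - D2) }

/-- `α₂(x,y,x̂₁ | Q_{X̂₂|YX̂₁})`. -/
noncomputable def alpha2 (d2 : X → X2 → ℝ) (l2 : ℝ) (Q2 : Y → X1 → X2 → ℝ)
    (x : X) (y : Y) (a : X1) : ℝ :=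
  (∑ b, Q2 y a b * Real.exp (-(l2 * d2 x b)))⁻¹

/-- `α(x,y | Q_{X̂₁}, Q_{X̂₂|YX̂₁})`. -/
noncomputable def alpha (d1 : X → X1 → ℝ) (d2 : X → X2 → ℝ) (l1 l2 : ℝ)
    (Q1 : X1 → ℝ) (Q2 : Y → X1 → X2 → ℝ) (x : X) (y : Y) : ℝ :=
  (∑ a, Q1 a * Real.exp (-(l1 * d1 x a)) / alpha2 d2 l2 Q2 x y a)⁻¹

/-- The `(D₁,D₂)`-tilted information density for the Kaspi problem, built from
the marginals `Q1 = P*_{X̂₁}`, `Q2 = P*_{X̂₂|YX̂₁}` of an optimal test-channel pair. -/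
noncomputable def jK (d1 : X → X1 → ℝ) (d2 : X → X2 → ℝ) (l1 l2 D1 D2 : ℝ)
    (Q1 : X1 → ℝ) (Q2 : Y → X1 → X2 → ℝ) (x : X) (y : Y) : ℝ :=
  Real.log (alpha d1 d2 l1 l2 Q1 Q2 x y) - l1 * D1 - l2 * D2

end Kaspi

/-!
For output laws `Q₁`, `Q₂` put `1/α_Q(x,y) = ∑ Q₁(x̂₁) e^{-λ₁d₁} ∑ Q₂(x̂₂|y,x̂₁) e^{-λ₂d₂}`
(`normalizer`). Replacing the output marginals in the Lagrangian by `(Q₁, Q₂)` can only increase it,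
since mutual information is the least conditional relative entropy to an output law, and the
channels tilted by `e^{-λd}` make it equal to `-E[log (1/α_Q)]`; dual optimality thus gives
`R_K ≤ -E[log (1/α_Q)] - λ₁D₁ - λ₂D₂`. For an optimal pair Gibbs' inequality gives the reverse
bound at its own output laws, which therefore maximize `E[log (1/α_Q)]`. Mixing weight `ε` of the
point mass at `x̂₁`, with `X̂₂ ~ q(y,·)`, into the optimal joint output law makes `1/α_Q` at least
`(1-ε)/α + ε e^{-λ₁d₁(x,x̂₁)} ∑ q e^{-λ₂d₂}`, and the first-order condition at `ε = 0` reads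
`E[α e^{-λ₁d₁(X,x̂₁)} ∑ q e^{-λ₂d₂}] ≤ 1`: this is `ν₁ ≤ 1` for `q = P*_{X̂₂|YX̂₁}(·|y,x̂₁)` and
`ν₂ ≤ 1` for `q = Q_{X̂₂|YX̂₁}(·|y,x̂₁)`.
-/

namespace Kaspi

open Real

section Gibbs

variable {ι : Type*} [Fintype ι]

lemma sub_le_mul_log_div {v w : ℝ} (hv : 0 ≤ v) (hw : 0 ≤ w) (hvw : w = 0 → v = 0) :
    v - w ≤ v * log (v / w) := by
  rcases hw.eq_or_lt with rfl | hw
  · simp [hvw rfl]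
  have h := mul_le_mul_of_nonneg_left (self_sub_one_le_mul_log (div_nonneg hv hw.le)) hw.le
  rwa [mul_sub, mul_div_cancel₀ _ hw.ne', mul_one, ← mul_assoc, mul_div_cancel₀ _ hw.ne'] at h

lemma sum_sub_sum_le_sum_mul_log_div {v w : ι → ℝ} (hv : ∀ i, 0 ≤ v i) (hw : ∀ i, 0 ≤ w i)
    (hvw : ∀ i, w i = 0 → v i = 0) :
    ∑ i, v i - ∑ i, w i ≤ ∑ i, v i * log (v i / w i) := by
  rw [← sum_sub_distrib]
  exact sum_le_sum fun i _ => sub_le_mul_log_div (hv i) (hw i) (hvw i)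

lemma neg_log_sum_le_sum_mul_log_div {v w : ι → ℝ} (hv : ∀ i, 0 ≤ v i) (hv1 : ∑ i, v i = 1)
    (hw : ∀ i, 0 ≤ w i) (hvw : ∀ i, w i = 0 → v i = 0) :
    -log (∑ i, w i) ≤ ∑ i, v i * log (v i / w i) := by
  set s := ∑ i, w i
  have hs : 0 < s := by
    obtain ⟨i, -, hi⟩ := exists_ne_zero_of_sum_ne_zero (hv1.trans_ne one_ne_zero)
    exact (lt_of_le_of_ne (hw i) (Ne.symm (mt (hvw i) hi))).trans_le
      (single_le_sum (fun j _ => hw j) (mem_univ i))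
  have key := sum_sub_sum_le_sum_mul_log_div hv (fun i => div_nonneg (hw i) hs.le)
    (fun i hi => hvw i (by simpa [hs.ne'] using hi))
  have hterm : ∀ i, v i * log (v i / (w i / s)) = v i * log (v i / w i) + v i * log s := by
    intro i
    rcases eq_or_ne (v i) 0 with h | h
    · simp [h]
    have hwi : w i ≠ 0 := fun h' => h (hvw i h')
    rw [div_div_eq_mul_div, mul_div_right_comm, log_mul (div_ne_zero h hwi) hs.ne', mul_add]
  rw [← sum_div, div_self hs.ne', hv1, sub_self, sum_congr rfl fun i _ => hterm i,
    sum_add_distrib, ← sum_mul, hv1, one_mul] at key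
  linarith

end Gibbs

section FirstOrder

variable {ι : Type*} [Fintype ι]

/-- `log (1 + x) ≥ x / (1 + x)`; divide by `ε` and let `ε → 0`. -/
lemma sum_mul_nonpos_of_log_one_add_nonpos {p u : ι → ℝ}
    (hp : ∀ i, 0 ≤ p i) (hu : ∀ i, p i ≠ 0 → -1 ≤ u i)
    (h : ∀ ε ∈ Set.Ioo (0 : ℝ) 1, ∑ i, p i * log (1 + ε * u i) ≤ 0) :
    ∑ i, p i * u i ≤ 0 := by
  have hg : ∀ ε ∈ Set.Ioo (0 : ℝ) 1, ∑ i, p i * (u i / (1 + ε * u i)) ≤ 0 := by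
    intro ε hε
    have hterm : ∀ i, ε * (p i * (u i / (1 + ε * u i))) ≤ p i * log (1 + ε * u i) := by
      intro i
      rcases eq_or_ne (p i) 0 with h0 | h0
      · simp [h0]
      have hpos : 0 < 1 + ε * u i := by nlinarith [hu i h0, hε.1, hε.2]
      rw [mul_left_comm]
      refine mul_le_mul_of_nonneg_left ?_ (hp i)
      calc ε * (u i / (1 + ε * u i)) = 1 - (1 + ε * u i)⁻¹ := by
            field_simp
            ring
        _ ≤ _ := one_sub_inv_le_log_of_pos hpos
    have hsum := (sum_le_sum fun i (_ : i ∈ univ) => hterm i).trans (h ε hε)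
    rw [← mul_sum] at hsum
    exact nonpos_of_mul_nonpos_right hsum hε.1
  have hcont : ContinuousAt (fun ε : ℝ => ∑ i, p i * (u i / (1 + ε * u i))) 0 := by
    fun_prop (disch := simp)
  have hev : ∀ᶠ ε in nhdsWithin (0 : ℝ) (Set.Ioi 0), ∑ i, p i * (u i / (1 + ε * u i)) ≤ 0 := by
    filter_upwards [Ioo_mem_nhdsGT one_pos] with ε hε using hg ε hε
  simpa using le_of_tendsto (hcont.tendsto.mono_left nhdsWithin_le_nhds) hev

lemma sum_mul_div_le_one_of_log_le {p s t : ι → ℝ}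
    (hp : ∀ i, 0 ≤ p i) (hp1 : ∑ i, p i = 1) (hs : ∀ i, p i ≠ 0 → 0 < s i) (ht : ∀ i, 0 ≤ t i)
    (h : ∀ ε ∈ Set.Ioo (0 : ℝ) 1,
      ∑ i, p i * log ((1 - ε) * s i + ε * t i) ≤ ∑ i, p i * log (s i)) :
    ∑ i, p i * (t i / s i) ≤ 1 := by
  set u : ι → ℝ := fun i => t i / s i - 1
  have hu : ∀ i, p i ≠ 0 → -1 ≤ u i := fun i hi => by
    simpa [u] using div_nonneg (ht i) (hs i hi).le
  have hlog : ∀ ε ∈ Set.Ioo (0 : ℝ) 1, ∑ i, p i * log (1 + ε * u i) ≤ 0 := by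
    intro ε hε
    have hterm : ∀ i, p i * log (1 + ε * u i) =
        p i * log ((1 - ε) * s i + ε * t i) - p i * log (s i) := by
      intro i
      rcases eq_or_ne (p i) 0 with h0 | h0
      · simp [h0]
      have hsi := hs i h0
      have hmix : 0 < (1 - ε) * s i + ε * t i :=
        add_pos_of_pos_of_nonneg (mul_pos (sub_pos.2 hε.2) hsi) (mul_nonneg hε.1.le (ht i))
      have heq : 1 + ε * u i = ((1 - ε) * s i + ε * t i) / s i := by
        simp only [u]
        field_simp
        ring
      rw [heq, log_div hmix.ne' hsi.ne', mul_sub]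
    rw [sum_congr rfl fun i _ => hterm i, sum_sub_distrib]
    linarith [h ε hε]
  have hsplit : ∑ i, p i * (t i / s i) = ∑ i, p i * u i + ∑ i, p i := by
    rw [← sum_add_distrib]
    exact sum_congr rfl fun i _ => by simp only [u]; ring
  linarith [sum_mul_nonpos_of_log_one_add_nonpos hp hu hlog]

end FirstOrder

section Marginals

lemma IsPMF.exists_ne_zero {α : Type*} [Fintype α] {p : α → ℝ} (hp : IsPMF p) : ∃ a, p a ≠ 0 := by
  obtain ⟨a, -, ha⟩ := exists_ne_zero_of_sum_ne_zero (hp.2.trans_ne one_ne_zero)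
  exact ⟨a, ha⟩

lemma IsPMF.sum_mul_pos {α : Type*} [Fintype α] {p c : α → ℝ} (hp : IsPMF p)
    (hc : ∀ a, 0 < c a) : 0 < ∑ a, p a * c a := by
  obtain ⟨a, ha⟩ := hp.exists_ne_zero
  exact sum_pos' (fun b _ => mul_nonneg (hp.1 b) (hc b).le)
    ⟨a, mem_univ a, mul_pos ((hp.1 a).lt_of_ne' ha) (hc a)⟩

variable {X Y X1 X2 : Type*} [Fintype X] [Fintype Y] [Fintype X1]
  {P : X → Y → ℝ} {V1 : X → Y → X1 → ℝ} {V2 : X → Y → X1 → X2 → ℝ}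

lemma IsPMF2.exists_ne_zero (hP : IsPMF2 P) : ∃ x y, P x y ≠ 0 := by
  obtain ⟨x, -, hx⟩ := exists_ne_zero_of_sum_ne_zero (hP.2.trans_ne one_ne_zero)
  obtain ⟨y, -, hy⟩ := exists_ne_zero_of_sum_ne_zero hx
  exact ⟨x, y, hy⟩

lemma mul_chan_nonneg (hP : IsPMF2 P) (hV1 : IsChan1 V1) (x : X) (y : Y) (a : X1) :
    0 ≤ P x y * V1 x y a :=
  mul_nonneg (hP.1 x y) ((hV1 x y).1 a)

lemma pA_nonneg (hP : IsPMF2 P) (hV1 : IsChan1 V1) (a : X1) : 0 ≤ pA P V1 a :=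
  sum_nonneg fun x _ => sum_nonneg fun y _ => mul_chan_nonneg hP hV1 x y a

lemma isPMF_pA (hP : IsPMF2 P) (hV1 : IsChan1 V1) : IsPMF (pA P V1) := by
  refine ⟨pA_nonneg hP hV1, ?_⟩
  simp only [pA]
  rw [sum_comm]
  simp_rw [sum_comm (γ := X1), ← mul_sum, (hV1 _ _).2, mul_one]
  exact hP.2

lemma pA_ne_zero (hP : IsPMF2 P) (hV1 : IsChan1 V1) {x : X} {y : Y} {a : X1}
    (h : P x y * V1 x y a ≠ 0) : pA P V1 a ≠ 0 :=
  ((mul_chan_nonneg hP hV1 x y a).lt_of_ne' h |>.trans_le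
    ((single_le_sum (fun y _ => mul_chan_nonneg hP hV1 x y a) (mem_univ y)).trans
      (single_le_sum (fun x _ => sum_nonneg fun y _ => mul_chan_nonneg hP hV1 x y a)
        (mem_univ x)))).ne'

lemma pYA_nonneg (hP : IsPMF2 P) (hV1 : IsChan1 V1) (y : Y) (a : X1) : 0 ≤ pYA P V1 y a :=
  sum_nonneg fun x _ => mul_chan_nonneg hP hV1 x y a

lemma pYA_ne_zero (hP : IsPMF2 P) (hV1 : IsChan1 V1) {x : X} {y : Y} {a : X1}
    (h : P x y * V1 x y a ≠ 0) : pYA P V1 y a ≠ 0 :=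
  ((mul_chan_nonneg hP hV1 x y a).lt_of_ne' h |>.trans_le
    (single_le_sum (fun x _ => mul_chan_nonneg hP hV1 x y a) (mem_univ x))).ne'

lemma pYA_mul_pBgYA (hP : IsPMF2 P) (hV1 : IsChan1 V1) (y : Y) (a : X1) (b : X2) :
    pYA P V1 y a * pBgYA P V1 V2 y a b = ∑ x, P x y * V1 x y a * V2 x y a b := by
  rcases eq_or_ne (pYA P V1 y a) 0 with h | h
  · have hzero : ∀ x, P x y * V1 x y a = 0 := fun x => by_contra fun hx => pYA_ne_zero hP hV1 hx h
    simp [h, hzero]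
  · exact mul_div_cancel₀ _ h

variable [Fintype X2]

lemma mul_chan_mul_chan_nonneg (hP : IsPMF2 P) (hV1 : IsChan1 V1) (hV2 : IsChan2 V2)
    (x : X) (y : Y) (a : X1) (b : X2) : 0 ≤ P x y * V1 x y a * V2 x y a b :=
  mul_nonneg (mul_chan_nonneg hP hV1 x y a) ((hV2 x y a).1 b)

lemma pBgYA_nonneg (hP : IsPMF2 P) (hV1 : IsChan1 V1) (hV2 : IsChan2 V2) (y : Y) (a : X1)
    (b : X2) : 0 ≤ pBgYA P V1 V2 y a b :=
  div_nonneg (sum_nonneg fun x _ => mul_chan_mul_chan_nonneg hP hV1 hV2 x y a b)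
    (pYA_nonneg hP hV1 y a)

lemma isPMF_pBgYA (hP : IsPMF2 P) (hV1 : IsChan1 V1) (hV2 : IsChan2 V2) {y : Y} {a : X1}
    (h : pYA P V1 y a ≠ 0) : IsPMF (pBgYA P V1 V2 y a) := by
  refine ⟨pBgYA_nonneg hP hV1 hV2 y a, ?_⟩
  simp only [pBgYA]
  rw [← sum_div, sum_comm]
  simp_rw [← mul_sum, (hV2 _ _ _).2, mul_one]
  exact div_self h

lemma sum_pBgYA_le_one (hP : IsPMF2 P) (hV1 : IsChan1 V1) (hV2 : IsChan2 V2) (y : Y) (a : X1) :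
    ∑ b, pBgYA P V1 V2 y a b ≤ 1 := by
  rcases eq_or_ne (pYA P V1 y a) 0 with h | h
  · simp [pBgYA, h]
  · exact (isPMF_pBgYA hP hV1 hV2 h).2.le

lemma pBgYA_ne_zero (hP : IsPMF2 P) (hV1 : IsChan1 V1) (hV2 : IsChan2 V2) {x : X} {y : Y}
    {a : X1} {b : X2} (h : P x y * V1 x y a * V2 x y a b ≠ 0) : pBgYA P V1 V2 y a b ≠ 0 := by
  have hYA := pYA_ne_zero hP hV1 (left_ne_zero_of_mul h)
  refine div_ne_zero (((mul_chan_mul_chan_nonneg hP hV1 hV2 x y a b).lt_of_ne' h).trans_le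
    (single_le_sum (fun x _ => mul_chan_mul_chan_nonneg hP hV1 hV2 x y a b) (mem_univ x))).ne' hYA

end Marginals

section Tilting

variable {X Y X1 X2 : Type*}
  (d1 : X → X1 → ℝ) (d2 : X → X2 → ℝ) (l1 l2 : ℝ) (Q1 : X1 → ℝ) (Q2 : Y → X1 → X2 → ℝ)

noncomputable def tiltedWeight (x : X) (y : Y) (ab : X1 × X2) : ℝ :=
  Q1 ab.1 * Q2 y ab.1 ab.2 * (exp (-(l1 * d1 x ab.1)) * exp (-(l2 * d2 x ab.2)))

variable {d1 d2 l1 l2 Q1 Q2}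

lemma log_div_tiltedWeight {x : X} {y : Y} {a : X1} {b : X2} {v1 v2 : ℝ} (hv1 : v1 ≠ 0)
    (hv2 : v2 ≠ 0) (hQ1 : Q1 a ≠ 0) (hQ2 : Q2 y a b ≠ 0) :
    log (v1 * v2 / tiltedWeight d1 d2 l1 l2 Q1 Q2 x y (a, b)) =
      log (v1 / Q1 a) + log (v2 / Q2 y a b) + l1 * d1 x a + l2 * d2 x b := by
  have he : exp (-(l1 * d1 x a)) * exp (-(l2 * d2 x b)) ≠ 0 := by positivity
  rw [tiltedWeight, log_div (mul_ne_zero hv1 hv2) (mul_ne_zero (mul_ne_zero hQ1 hQ2) he),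
    log_mul hv1 hv2, log_mul (mul_ne_zero hQ1 hQ2) he, log_mul hQ1 hQ2,
    log_mul (exp_ne_zero _) (exp_ne_zero _), log_exp, log_exp, log_div hv1 hQ1, log_div hv2 hQ2]
  ring

variable (d2 l2 Q2) [Fintype X2]

/-- The reciprocal of `alpha2`, as `normalizer` below is that of `alpha`. -/
noncomputable def normalizer2 (x : X) (y : Y) (a : X1) : ℝ :=
  ∑ b, Q2 y a b * exp (-(l2 * d2 x b))

/-- With `tiltChan1`, the minimizing test channels of the Lagrangian when the output distributions
are frozen at `Q1`, `Q2`. -/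
noncomputable def tiltChan2 (x : X) (y : Y) (a : X1) (b : X2) : ℝ :=
  Q2 y a b * exp (-(l2 * d2 x b)) / normalizer2 d2 l2 Q2 x y a

variable {d2 l2 Q2}

lemma normalizer2_nonneg (hQ2 : ∀ y a b, 0 ≤ Q2 y a b) (x : X) (y : Y) (a : X1) :
    0 ≤ normalizer2 d2 l2 Q2 x y a :=
  sum_nonneg fun b _ => mul_nonneg (hQ2 y a b) (exp_nonneg _)

lemma normalizer2_pos {y : Y} {a : X1} (hQ2 : IsPMF (Q2 y a)) (x : X) :
    0 < normalizer2 d2 l2 Q2 x y a :=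
  hQ2.sum_mul_pos fun _ => exp_pos _

lemma isChan2_tiltChan2 (hQ2 : ∀ y a, IsPMF (Q2 y a)) :
    IsChan2 (X := X) (tiltChan2 d2 l2 Q2) := fun x y a => by
  have hT := normalizer2_pos (d2 := d2) (l2 := l2) (hQ2 y a) x
  refine ⟨fun b => div_nonneg (mul_nonneg ((hQ2 y a).1 b) (exp_nonneg _)) hT.le, ?_⟩
  simp only [tiltChan2, ← sum_div]
  exact div_self hT.ne'

variable (d1 d2 l1 l2 Q1 Q2) [Fintype X1]

noncomputable def normalizer (x : X) (y : Y) : ℝ :=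
  ∑ a, Q1 a * (exp (-(l1 * d1 x a)) * normalizer2 d2 l2 Q2 x y a)

lemma alpha_eq_inv_normalizer (x : X) (y : Y) :
    alpha d1 d2 l1 l2 Q1 Q2 x y = (normalizer d1 d2 l1 l2 Q1 Q2 x y)⁻¹ := by
  simp only [alpha, alpha2, normalizer, normalizer2, div_inv_eq_mul, mul_assoc]

lemma sum_tiltedWeight (x : X) (y : Y) :
    ∑ ab, tiltedWeight d1 d2 l1 l2 Q1 Q2 x y ab = normalizer d1 d2 l1 l2 Q1 Q2 x y := by
  simp only [Fintype.sum_prod_type, tiltedWeight, normalizer, normalizer2, mul_sum]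
  exact sum_congr rfl fun a _ => sum_congr rfl fun b _ => by ring

noncomputable def tiltChan1 (x : X) (y : Y) (a : X1) : ℝ :=
  Q1 a * (exp (-(l1 * d1 x a)) * normalizer2 d2 l2 Q2 x y a) / normalizer d1 d2 l1 l2 Q1 Q2 x y

variable {d1 d2 l1 l2 Q1 Q2}

lemma sum_mixture_mul_exp (ε : ℝ) (a0 : X1) (q : Y → X2 → ℝ) (x : X) (y : Y) :
    ∑ ab : X1 × X2, ((1 - ε) * (Q1 ab.1 * Q2 y ab.1 ab.2) + ε * if ab.1 = a0 then q y ab.2 else 0) *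
        (exp (-(l1 * d1 x ab.1)) * exp (-(l2 * d2 x ab.2))) =
      (1 - ε) * normalizer d1 d2 l1 l2 Q1 Q2 x y +
        ε * (exp (-(l1 * d1 x a0)) * ∑ b, q y b * exp (-(l2 * d2 x b))) := by
  rw [← sum_tiltedWeight]
  simp only [tiltedWeight, add_mul, sum_add_distrib, mul_assoc, ← mul_sum]
  simp only [Fintype.sum_prod_type, mul_sum, ite_mul, zero_mul, sum_ite_irrel, sum_const_zero,
    sum_ite_eq', mem_univ, ↓reduceIte, add_right_inj]
  exact sum_congr rfl fun b _ => by ring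

lemma normalizer_nonneg (hQ1 : ∀ a, 0 ≤ Q1 a) (hQ2 : ∀ y a b, 0 ≤ Q2 y a b) (x : X) (y : Y) :
    0 ≤ normalizer d1 d2 l1 l2 Q1 Q2 x y :=
  sum_nonneg fun a _ =>
    mul_nonneg (hQ1 a) (mul_nonneg (exp_nonneg _) (normalizer2_nonneg hQ2 x y a))

lemma normalizer_pos (hQ1 : IsPMF Q1) (hQ2 : ∀ y a, IsPMF (Q2 y a)) (x : X) (y : Y) :
    0 < normalizer d1 d2 l1 l2 Q1 Q2 x y :=
  hQ1.sum_mul_pos fun a => mul_pos (exp_pos _) (normalizer2_pos (hQ2 y a) x)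

lemma normalizer_le_one (hd1 : ∀ x a, 0 ≤ d1 x a) (hd2 : ∀ x b, 0 ≤ d2 x b) (hl1 : 0 ≤ l1)
    (hl2 : 0 ≤ l2) (hQ1 : IsPMF Q1) (hQ2 : ∀ y a b, 0 ≤ Q2 y a b)
    (hQ2_le : ∀ y a, ∑ b, Q2 y a b ≤ 1) (x : X) (y : Y) :
    normalizer d1 d2 l1 l2 Q1 Q2 x y ≤ 1 := by
  have hexp : ∀ l d, 0 ≤ l → 0 ≤ d → exp (-(l * d)) ≤ 1 := fun l d hl hd =>
    exp_le_one_iff.2 (neg_nonpos.2 (mul_nonneg hl hd))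
  have h2 : ∀ a, normalizer2 d2 l2 Q2 x y a ≤ 1 := fun a =>
    (sum_le_sum fun b _ => mul_le_of_le_one_right (hQ2 y a b) (hexp _ _ hl2 (hd2 x b))).trans
      (hQ2_le y a)
  calc normalizer d1 d2 l1 l2 Q1 Q2 x y ≤ ∑ a, Q1 a := sum_le_sum fun a _ =>
        mul_le_of_le_one_right (hQ1.1 a) (mul_le_one₀ (hexp _ _ hl1 (hd1 x a))
          (normalizer2_nonneg hQ2 x y a) (h2 a))
    _ = 1 := hQ1.2

lemma isChan1_tiltChan1 (hQ1 : IsPMF Q1) (hQ2 : ∀ y a, IsPMF (Q2 y a)) :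
    IsChan1 (tiltChan1 d1 d2 l1 l2 Q1 Q2) := fun x y => by
  have hS := normalizer_pos (d1 := d1) (d2 := d2) (l1 := l1) (l2 := l2) hQ1 hQ2 x y
  refine ⟨fun a => div_nonneg (mul_nonneg (hQ1.1 a) (mul_nonneg (exp_nonneg _)
    (normalizer2_pos (hQ2 y a) x).le)) hS.le, ?_⟩
  simp only [tiltChan1, ← sum_div]
  exact div_self hS.ne'

lemma tiltChan1_mul_tiltChan2 (hQ2 : ∀ y a, IsPMF (Q2 y a)) (x : X) (y : Y) (a : X1) (b : X2) :
    tiltChan1 d1 d2 l1 l2 Q1 Q2 x y a * tiltChan2 d2 l2 Q2 x y a b =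
      tiltedWeight d1 d2 l1 l2 Q1 Q2 x y (a, b) / normalizer d1 d2 l1 l2 Q1 Q2 x y := by
  have hT := (normalizer2_pos (d2 := d2) (l2 := l2) (hQ2 y a) x).ne'
  simp only [tiltChan1, tiltChan2, tiltedWeight]
  field_simp

end Tilting

/-- The right side exceeds the left by `c * ∑ k, q k * log (q k / Q k) ≥ 0` (Gibbs). -/
lemma sum_mul_log_div_le_of_marginal {ι κ : Type*} [Fintype ι] [Fintype κ] {m K : ι → κ → ℝ}
    {q Q : κ → ℝ} {c : ℝ} (hm : ∀ i k, 0 ≤ m i k) (hc : 0 ≤ c) (hmq : ∀ k, ∑ i, m i k = c * q k)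
    (hq : ∀ k, 0 ≤ q k) (hq1 : c ≠ 0 → ∑ k, q k = 1) (hQ : ∀ k, 0 ≤ Q k) (hQ1 : ∑ k, Q k ≤ 1)
    (hsupp : ∀ i k, m i k ≠ 0 → K i k ≠ 0 ∧ Q k ≠ 0) :
    ∑ i, ∑ k, m i k * log (K i k / q k) ≤ ∑ i, ∑ k, m i k * log (K i k / Q k) := by
  have hle : ∀ i k, m i k ≤ c * q k := fun i k =>
    (single_le_sum (fun j _ => hm j k) (mem_univ i)).trans_eq (hmq k)
  rcases eq_or_ne c 0 with rfl | hc0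
  · have hm0 : ∀ i k, m i k = 0 := fun i k => le_antisymm ((hle i k).trans_eq (zero_mul _)) (hm i k)
    simp [hm0]
  have hqQ : ∀ k, Q k = 0 → q k = 0 := fun k hQk => by
    by_contra hqk
    have hcol : ∑ i, m i k ≠ 0 := by
      rw [hmq]
      exact mul_ne_zero hc0 hqk
    obtain ⟨i, -, hi⟩ := exists_ne_zero_of_sum_ne_zero hcol
    exact (hsupp i k hi).2 hQk
  have hterm : ∀ i k, m i k * log (K i k / Q k) =
      m i k * log (K i k / q k) + m i k * log (q k / Q k) := by
    intro i k
    rcases eq_or_ne (m i k) 0 with h | h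
    · simp [h]
    obtain ⟨hK, hQk⟩ := hsupp i k h
    have hqk : q k ≠ 0 := fun hqk =>
      h (le_antisymm ((hle i k).trans_eq (by rw [hqk, mul_zero])) (hm i k))
    rw [← mul_add, ← log_mul (div_ne_zero hK hqk) (div_ne_zero hqk hQk), div_mul_div_cancel₀ hqk]
  have hcross : ∑ i, ∑ k, m i k * log (q k / Q k) = c * ∑ k, q k * log (q k / Q k) := by
    rw [sum_comm, mul_sum]
    exact sum_congr rfl fun k _ => by rw [← sum_mul, hmq, mul_assoc]
  have hgibbs := sum_sub_sum_le_sum_mul_log_div hq hQ hqQ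
  simp only [hterm, sum_add_distrib, hcross, le_add_iff_nonneg_right]
  exact mul_nonneg hc (by linarith [hq1 hc0])

section Lagrangian

variable {X Y X1 X2 : Type*} [Fintype X] [Fintype Y] [Fintype X1] [Fintype X2]

/-- The conditional relative entropy `D(P_{X̂₁|XY} ‖ Q₁ | P_{XY})`. -/
noncomputable def condRelEnt1 (P : X → Y → ℝ) (V1 : X → Y → X1 → ℝ) (Q1 : X1 → ℝ) : ℝ :=
  ∑ x, ∑ y, ∑ a, P x y * V1 x y a * log (V1 x y a / Q1 a)

/-- The conditional relative entropy `D(P_{X̂₂|XYX̂₁} ‖ Q₂ | P_{XYX̂₁})`. -/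
noncomputable def condRelEnt2 (P : X → Y → ℝ) (V1 : X → Y → X1 → ℝ)
    (V2 : X → Y → X1 → X2 → ℝ) (Q2 : Y → X1 → X2 → ℝ) : ℝ :=
  ∑ x, ∑ y, ∑ a, ∑ b, P x y * V1 x y a * V2 x y a b * log (V2 x y a b / Q2 y a b)

/-- The Lagrangian with the output distributions replaced by references `Q1`, `Q2`; for the induced
marginals `pA`, `pBgYA` it is `I1 + I2 + l1 * Ed1 + l2 * Ed2` by definition. -/
noncomputable def refLagrangian (P : X → Y → ℝ) (d1 : X → X1 → ℝ) (d2 : X → X2 → ℝ) (l1 l2 : ℝ)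
    (V1 : X → Y → X1 → ℝ) (V2 : X → Y → X1 → X2 → ℝ) (Q1 : X1 → ℝ) (Q2 : Y → X1 → X2 → ℝ) : ℝ :=
  condRelEnt1 P V1 Q1 + condRelEnt2 P V1 V2 Q2 + l1 * Ed1 P V1 d1 + l2 * Ed2 P V1 V2 d2

variable {P : X → Y → ℝ} {d1 : X → X1 → ℝ} {d2 : X → X2 → ℝ} {l1 l2 : ℝ}
  {V1 : X → Y → X1 → ℝ} {V2 : X → Y → X1 → X2 → ℝ} {Q1 : X1 → ℝ} {Q2 : Y → X1 → X2 → ℝ}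

lemma refLagrangian_eq (hV2 : IsChan2 V2)
    (hsupp : ∀ x y a b, P x y * V1 x y a * V2 x y a b ≠ 0 → Q1 a ≠ 0 ∧ Q2 y a b ≠ 0) :
    refLagrangian P d1 d2 l1 l2 V1 V2 Q1 Q2 = ∑ x, ∑ y, P x y * ∑ ab : X1 × X2,
      V1 x y ab.1 * V2 x y ab.1 ab.2 *
        log (V1 x y ab.1 * V2 x y ab.1 ab.2 / tiltedWeight d1 d2 l1 l2 Q1 Q2 x y ab) := by
  have hterm : ∀ x y a b,
      P x y * V1 x y a * log (V1 x y a / Q1 a) * V2 x y a b +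
        P x y * V1 x y a * V2 x y a b * log (V2 x y a b / Q2 y a b) +
        l1 * (P x y * V1 x y a * d1 x a) * V2 x y a b +
        l2 * (P x y * V1 x y a * V2 x y a b * d2 x b) =
      P x y * (V1 x y a * V2 x y a b *
        log (V1 x y a * V2 x y a b / tiltedWeight d1 d2 l1 l2 Q1 Q2 x y (a, b))) := by
    intro x y a b
    suffices hlog : P x y * V1 x y a * V2 x y a b *
        (log (V1 x y a / Q1 a) + log (V2 x y a b / Q2 y a b) + l1 * d1 x a + l2 * d2 x b) =
        P x y * V1 x y a * V2 x y a b *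
          log (V1 x y a * V2 x y a b / tiltedWeight d1 d2 l1 l2 Q1 Q2 x y (a, b)) by
      linear_combination hlog
    rcases eq_or_ne (P x y * V1 x y a * V2 x y a b) 0 with h | h
    · rw [h, zero_mul, zero_mul]
    obtain ⟨hQ1, hQ2⟩ := hsupp x y a b h
    rw [log_div_tiltedWeight (right_ne_zero_of_mul (left_ne_zero_of_mul h))
      (right_ne_zero_of_mul h) hQ1 hQ2]
  have hchan : ∀ x y a (c : ℝ), ∑ b, c * V2 x y a b = c := fun x y a c => by
    rw [← mul_sum, (hV2 x y a).2, mul_one]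
  simp only [refLagrangian, condRelEnt1, condRelEnt2, Ed1, Ed2, mul_sum, ← sum_add_distrib,
    Fintype.sum_prod_type]
  refine sum_congr rfl fun x _ => sum_congr rfl fun y _ => sum_congr rfl fun a _ => ?_
  simp only [← hterm, sum_add_distrib, hchan]

lemma I1_le_condRelEnt1 (hP : IsPMF2 P) (hV1 : IsChan1 V1) (hQ1 : IsPMF Q1)
    (hsupp : ∀ x y a, P x y * V1 x y a ≠ 0 → Q1 a ≠ 0) : I1 P V1 ≤ condRelEnt1 P V1 Q1 := by
  have h := sum_mul_log_div_le_of_marginal (m := fun (z : X × Y) a => P z.1 z.2 * V1 z.1 z.2 a)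
    (K := fun z a => V1 z.1 z.2 a) (q := pA P V1) (fun z a => mul_chan_nonneg hP hV1 z.1 z.2 a)
    zero_le_one
    (fun a => (Fintype.sum_prod_type' fun x y => P x y * V1 x y a).trans (one_mul _).symm)
    (pA_nonneg hP hV1) (fun _ => (isPMF_pA hP hV1).2) hQ1.1 hQ1.2.le
    (fun z a h => ⟨right_ne_zero_of_mul h, hsupp _ _ _ h⟩)
  simpa only [I1, condRelEnt1, Fintype.sum_prod_type] using h

lemma I2_le_condRelEnt2 (hP : IsPMF2 P) (hV1 : IsChan1 V1) (hV2 : IsChan2 V2)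
    (hQ2 : ∀ y a, IsPMF (Q2 y a))
    (hsupp : ∀ x y a b, P x y * V1 x y a * V2 x y a b ≠ 0 → Q2 y a b ≠ 0) :
    I2 P V1 V2 ≤ condRelEnt2 P V1 V2 Q2 := by
  have hcomm : ∀ f : X → Y → X1 → X2 → ℝ,
      ∑ x, ∑ y, ∑ a, ∑ b, f x y a b = ∑ y, ∑ a, ∑ x, ∑ b, f x y a b := fun f => by
    rw [sum_comm]
    exact sum_congr rfl fun y _ => sum_comm
  simp only [I2, condRelEnt2]
  rw [hcomm, hcomm]
  exact sum_le_sum fun y _ => sum_le_sum fun a _ =>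
    sum_mul_log_div_le_of_marginal (fun x b => mul_chan_mul_chan_nonneg hP hV1 hV2 x y a b)
      (pYA_nonneg hP hV1 y a) (fun b => (pYA_mul_pBgYA hP hV1 y a b).symm)
      (pBgYA_nonneg hP hV1 hV2 y a) (fun h => (isPMF_pBgYA hP hV1 hV2 h).2) (hQ2 y a).1
      (hQ2 y a).2.le (fun x b h => ⟨right_ne_zero_of_mul h, hsupp x y a b h⟩)

lemma neg_sum_log_normalizer_le_lagrangian (hP : IsPMF2 P) (hV1 : IsChan1 V1)
    (hV2 : IsChan2 V2) :
    -∑ x, ∑ y, P x y * log (normalizer d1 d2 l1 l2 (pA P V1) (pBgYA P V1 V2) x y) ≤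
      I1 P V1 + I2 P V1 V2 + l1 * Ed1 P V1 d1 + l2 * Ed2 P V1 V2 d2 := by
  change _ ≤ refLagrangian P d1 d2 l1 l2 V1 V2 (pA P V1) (pBgYA P V1 V2)
  rw [refLagrangian_eq hV2 fun x y a b h =>
    ⟨pA_ne_zero hP hV1 (left_ne_zero_of_mul h), pBgYA_ne_zero hP hV1 hV2 h⟩, ← sum_neg_distrib]
  refine sum_le_sum fun x _ => ?_
  rw [← sum_neg_distrib]
  refine sum_le_sum fun y _ => ?_
  rcases eq_or_ne (P x y) 0 with hPxy | hPxy
  · simp [hPxy]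
  rw [← mul_neg]
  refine mul_le_mul_of_nonneg_left ?_ (hP.1 x y)
  rw [← sum_tiltedWeight]
  refine neg_log_sum_le_sum_mul_log_div (fun ab => mul_nonneg ((hV1 x y).1 ab.1)
    ((hV2 x y ab.1).1 ab.2)) ?_ (fun ab => ?_) (fun ab hw => ?_)
  · simp only [Fintype.sum_prod_type, ← mul_sum, (hV2 _ _ _).2, mul_one, (hV1 x y).2]
  · exact mul_nonneg (mul_nonneg (pA_nonneg hP hV1 _) (pBgYA_nonneg hP hV1 hV2 _ _ _))
      (mul_nonneg (exp_nonneg _) (exp_nonneg _))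
  · by_contra hv
    have h := mul_ne_zero hPxy hv
    rw [← mul_assoc] at h
    exact mul_ne_zero (mul_ne_zero (pA_ne_zero hP hV1 (left_ne_zero_of_mul h))
      (pBgYA_ne_zero hP hV1 hV2 h)) (mul_ne_zero (exp_ne_zero _) (exp_ne_zero _)) hw

lemma refLagrangian_tiltChan (hQ1 : IsPMF Q1) (hQ2 : ∀ y a, IsPMF (Q2 y a)) :
    refLagrangian P d1 d2 l1 l2 (tiltChan1 d1 d2 l1 l2 Q1 Q2) (tiltChan2 d2 l2 Q2) Q1 Q2 =
      -∑ x, ∑ y, P x y * log (normalizer d1 d2 l1 l2 Q1 Q2 x y) := by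
  rw [refLagrangian_eq (isChan2_tiltChan2 hQ2) fun x y a b h => ⟨fun hQ => ?_, fun hQ => ?_⟩,
    ← sum_neg_distrib]
  rotate_left
  · exact h (by simp [tiltChan1, hQ])
  · exact h (by simp [tiltChan2, hQ])
  refine sum_congr rfl fun x _ => ?_
  rw [← sum_neg_distrib]
  refine sum_congr rfl fun y _ => ?_
  have hS := (normalizer_pos (d1 := d1) (d2 := d2) (l1 := l1) (l2 := l2) hQ1 hQ2 x y).ne'
  have hterm : ∀ ab : X1 × X2, ∀ S : ℝ, tiltedWeight d1 d2 l1 l2 Q1 Q2 x y ab / S *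
      log (tiltedWeight d1 d2 l1 l2 Q1 Q2 x y ab / S / tiltedWeight d1 d2 l1 l2 Q1 Q2 x y ab) =
      tiltedWeight d1 d2 l1 l2 Q1 Q2 x y ab / S * -log S := fun ab S => by
    rcases eq_or_ne (tiltedWeight d1 d2 l1 l2 Q1 Q2 x y ab) 0 with h | h
    · simp [h]
    · rw [div_div_cancel_left' h, log_inv]
  simp only [tiltChan1_mul_tiltChan2 hQ2, Prod.mk.eta, hterm, mul_neg, sum_neg_distrib, ← sum_mul,
    ← sum_div,
    sum_tiltedWeight, div_self hS, one_mul, mul_neg]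

end Lagrangian

section Duality

variable {X Y X1 X2 : Type*} [Fintype X] [Fintype Y] [Fintype X1] [Fintype X2]
  {P : X → Y → ℝ} {d1 : X → X1 → ℝ} {d2 : X → X2 → ℝ} {D1 D2 l1 l2 : ℝ}

lemma bddBelow_lagrangian (hP : IsPMF2 P) (hd1 : ∀ x a, 0 ≤ d1 x a) (hd2 : ∀ x b, 0 ≤ d2 x b)
    (hl1 : 0 ≤ l1) (hl2 : 0 ≤ l2) :
    BddBelow {r | ∃ (W1 : X → Y → X1 → ℝ) (W2 : X → Y → X1 → X2 → ℝ), IsChan1 W1 ∧ IsChan2 W2 ∧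
      r = I1 P W1 + I2 P W1 W2 + l1 * (Ed1 P W1 d1 - D1) + l2 * (Ed2 P W1 W2 d2 - D2)} := by
  refine ⟨-(l1 * D1) - l2 * D2, ?_⟩
  rintro r ⟨V1, V2, hV1, hV2, rfl⟩
  have hlog : ∑ x, ∑ y, P x y * log (normalizer d1 d2 l1 l2 (pA P V1) (pBgYA P V1 V2) x y) ≤ 0 :=
    sum_nonpos fun x _ => sum_nonpos fun y _ => mul_nonpos_of_nonneg_of_nonpos (hP.1 x y)
      (log_nonpos (normalizer_nonneg (pA_nonneg hP hV1) (pBgYA_nonneg hP hV1 hV2) x y)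
        (normalizer_le_one hd1 hd2 hl1 hl2 (isPMF_pA hP hV1) (pBgYA_nonneg hP hV1 hV2)
          (sum_pBgYA_le_one hP hV1 hV2) x y))
  linarith [neg_sum_log_normalizer_le_lagrangian (d1 := d1) (d2 := d2) (l1 := l1) (l2 := l2)
    hP hV1 hV2]

lemma RK_le_neg_sum_log_normalizer (hP : IsPMF2 P) (hd1 : ∀ x a, 0 ≤ d1 x a)
    (hd2 : ∀ x b, 0 ≤ d2 x b) (hdual : DualOpt P d1 d2 D1 D2 l1 l2) {Q1 : X1 → ℝ}
    {Q2 : Y → X1 → X2 → ℝ} (hQ1 : IsPMF Q1) (hQ2 : ∀ y a, IsPMF (Q2 y a)) :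
    RK P d1 d2 D1 D2 ≤
      -∑ x, ∑ y, P x y * log (normalizer d1 d2 l1 l2 Q1 Q2 x y) - l1 * D1 - l2 * D2 := by
  obtain ⟨hl1, hl2, hRK⟩ := hdual
  set V1 := tiltChan1 d1 d2 l1 l2 Q1 Q2
  set V2 := tiltChan2 (X := X) d2 l2 Q2
  have hV1 : IsChan1 V1 := isChan1_tiltChan1 hQ1 hQ2
  have hV2 : IsChan2 V2 := isChan2_tiltChan2 hQ2
  have hsupp1 : ∀ x y a, P x y * V1 x y a ≠ 0 → Q1 a ≠ 0 := fun x y a h hQ =>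
    h (by simp [V1, tiltChan1, hQ])
  have hsupp2 : ∀ x y a b, P x y * V1 x y a * V2 x y a b ≠ 0 → Q2 y a b ≠ 0 := fun x y a b h hQ =>
    h (by simp [V2, tiltChan2, hQ])
  calc RK P d1 d2 D1 D2
      ≤ I1 P V1 + I2 P V1 V2 + l1 * (Ed1 P V1 d1 - D1) + l2 * (Ed2 P V1 V2 d2 - D2) :=
        hRK ▸ csInf_le (bddBelow_lagrangian hP hd1 hd2 hl1 hl2) ⟨V1, V2, hV1, hV2, rfl⟩
    _ ≤ refLagrangian P d1 d2 l1 l2 V1 V2 Q1 Q2 - l1 * D1 - l2 * D2 := by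
        have := I1_le_condRelEnt1 hP hV1 hQ1 hsupp1
        have := I2_le_condRelEnt2 hP hV1 hV2 hQ2 hsupp2
        simp only [refLagrangian]
        linarith
    _ = _ := by rw [refLagrangian_tiltChan hQ1 hQ2]

lemma neg_sum_log_normalizer_le_RK (hP : IsPMF2 P) (hl1 : 0 ≤ l1) (hl2 : 0 ≤ l2)
    {W1 : X → Y → X1 → ℝ} {W2 : X → Y → X1 → X2 → ℝ} (hach : Achieves P d1 d2 D1 D2 W1 W2) :
    -∑ x, ∑ y, P x y * log (normalizer d1 d2 l1 l2 (pA P W1) (pBgYA P W1 W2) x y) -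
      l1 * D1 - l2 * D2 ≤ RK P d1 d2 D1 D2 := by
  obtain ⟨hW1, hW2, hE1, hE2, hRK⟩ := hach
  linarith [neg_sum_log_normalizer_le_lagrangian (d1 := d1) (d2 := d2) (l1 := l1) (l2 := l2)
    hP hW1 hW2, mul_le_mul_of_nonneg_left hE1 hl1, mul_le_mul_of_nonneg_left hE2 hl2]

theorem sum_log_normalizer_le (hP : IsPMF2 P) (hd1 : ∀ x a, 0 ≤ d1 x a) (hd2 : ∀ x b, 0 ≤ d2 x b)
    (hdual : DualOpt P d1 d2 D1 D2 l1 l2) {W1 : X → Y → X1 → ℝ} {W2 : X → Y → X1 → X2 → ℝ}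
    (hach : Achieves P d1 d2 D1 D2 W1 W2) {Q1 : X1 → ℝ} {Q2 : Y → X1 → X2 → ℝ} (hQ1 : IsPMF Q1)
    (hQ2 : ∀ y a, IsPMF (Q2 y a)) :
    ∑ x, ∑ y, P x y * log (normalizer d1 d2 l1 l2 Q1 Q2 x y) ≤
      ∑ x, ∑ y, P x y * log (normalizer d1 d2 l1 l2 (pA P W1) (pBgYA P W1 W2) x y) := by
  linarith [RK_le_neg_sum_log_normalizer hP hd1 hd2 hdual hQ1 hQ2,
    neg_sum_log_normalizer_le_RK hP hdual.1 hdual.2.1 hach]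

end Duality

lemma exists_isPMF_le {β : Type*} [Fintype β] [Nonempty β] {v : β → ℝ} (hv : ∀ b, 0 ≤ v b)
    (hv1 : ∑ b, v b ≤ 1) : ∃ p : β → ℝ, IsPMF p ∧ ∀ b, v b ≤ p b := by
  obtain ⟨b0⟩ := ‹Nonempty β›
  have hsingle : 0 ≤ Pi.single (M := fun _ => ℝ) b0 (1 - ∑ b, v b) :=
    Pi.single_nonneg.2 (sub_nonneg.2 hv1)
  refine ⟨v + Pi.single b0 (1 - ∑ b, v b), ⟨fun b => add_nonneg (hv b) (hsingle b), ?_⟩,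
    fun b => le_add_of_nonneg_right (hsingle b)⟩
  simp [sum_add_distrib, sum_pi_single']

lemma exists_isPMF_mul_ge {γ α β : Type*} [Fintype β] [Nonempty β] {r : α → ℝ}
    {J : γ → α → β → ℝ} (hJ : ∀ c a b, 0 ≤ J c a b) (hJr : ∀ c a, ∑ b, J c a b ≤ r a) :
    ∃ Q : γ → α → β → ℝ, (∀ c a, IsPMF (Q c a)) ∧ ∀ c a b, J c a b ≤ r a * Q c a b := by
  have hr : ∀ c a, 0 ≤ r a := fun c a => (sum_nonneg fun b _ => hJ c a b).trans (hJr c a)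
  choose Q hQ hJQ using fun c a => exists_isPMF_le (v := fun b => J c a b / r a)
    (fun b => div_nonneg (hJ c a b) (hr c a))
    (by rw [← sum_div]; exact div_le_one_of_le₀ (hJr c a) (hr c a))
  refine ⟨Q, hQ, fun c a b => ?_⟩
  rcases eq_or_ne (r a) 0 with h | h
  · rw [h, zero_mul]
    exact (single_le_sum (fun b _ => hJ c a b) (mem_univ b)).trans (h ▸ hJr c a)
  · calc J c a b = r a * (J c a b / r a) := (mul_div_cancel₀ _ h).symm
      _ ≤ r a * Q c a b := mul_le_mul_of_nonneg_left (hJQ c a b) (hr c a)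

section Perturbation

variable {X Y X1 X2 : Type*} [Fintype X] [Fintype Y] [Fintype X1] [Fintype X2]
  {P : X → Y → ℝ} {d1 : X → X1 → ℝ} {d2 : X → X2 → ℝ} {l1 l2 : ℝ}
  {W1 : X → Y → X1 → ℝ} {W2 : X → Y → X1 → X2 → ℝ}

/-- The witness: `Q1 = (1 - ε) pA + ε δ_{a0}`, and `Q2` any conditional pmf with `Q1 · Q2` above the
mixed joint output law `(1 - ε) pA · pBgYA + ε δ_{a0} · q`. -/
lemma exists_normalizer_ge_mix [Nonempty X2] (hP : IsPMF2 P) (hW1 : IsChan1 W1)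
    (hW2 : IsChan2 W2) (a0 : X1) {q : Y → X2 → ℝ} (hq : ∀ y b, 0 ≤ q y b)
    (hq1 : ∀ y, ∑ b, q y b ≤ 1) {ε : ℝ} (hε0 : 0 ≤ ε) (hε1 : ε ≤ 1) :
    ∃ (Q1 : X1 → ℝ) (Q2 : Y → X1 → X2 → ℝ), IsPMF Q1 ∧ (∀ y a, IsPMF (Q2 y a)) ∧ ∀ x y,
      (1 - ε) * normalizer d1 d2 l1 l2 (pA P W1) (pBgYA P W1 W2) x y +
          ε * (exp (-(l1 * d1 x a0)) * ∑ b, q y b * exp (-(l2 * d2 x b))) ≤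
        normalizer d1 d2 l1 l2 Q1 Q2 x y := by
  set Q1 : X1 → ℝ := fun a => (1 - ε) * pA P W1 a + ε * if a = a0 then 1 else 0
  set J : Y → X1 → X2 → ℝ := fun y a b =>
    (1 - ε) * (pA P W1 a * pBgYA P W1 W2 y a b) + ε * if a = a0 then q y b else 0
  have hε : 0 ≤ 1 - ε := sub_nonneg.2 hε1
  have hJ : ∀ y a b, 0 ≤ J y a b := fun y a b =>
    add_nonneg (mul_nonneg hε (mul_nonneg (pA_nonneg hP hW1 a) (pBgYA_nonneg hP hW1 hW2 y a b)))
      (mul_nonneg hε0 (by split_ifs; exacts [hq y b, le_rfl]))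
  have hJQ1 : ∀ y a, ∑ b, J y a b ≤ Q1 a := fun y a => by
    simp only [J, Q1, sum_add_distrib, ← mul_sum]
    refine add_le_add (mul_le_mul_of_nonneg_left (mul_le_of_le_one_right (pA_nonneg hP hW1 a)
      (sum_pBgYA_le_one hP hW1 hW2 y a)) hε) (mul_le_mul_of_nonneg_left ?_ hε0)
    split_ifs
    exacts [hq1 y, by simp]
  obtain ⟨Q2, hQ2, hJQ2⟩ := exists_isPMF_mul_ge hJ hJQ1
  refine ⟨Q1, Q2, ⟨fun a => ?_, ?_⟩, hQ2, fun x y => ?_⟩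
  · exact add_nonneg (mul_nonneg hε (pA_nonneg hP hW1 a)) (mul_nonneg hε0 (by split_ifs <;> simp))
  · simp [Q1, sum_add_distrib, ← mul_sum, (isPMF_pA hP hW1).2]
  rw [← sum_mixture_mul_exp, ← sum_tiltedWeight]
  exact sum_le_sum fun ab _ => mul_le_mul_of_nonneg_right (hJQ2 y ab.1 ab.2)
    (mul_nonneg (exp_nonneg _) (exp_nonneg _))

end Perturbation

section Nu

variable {X Y X1 X2 : Type*} [Fintype X] [Fintype Y] [Fintype X1] [Fintype X2]
  {P : X → Y → ℝ} {d1 : X → X1 → ℝ} {d2 : X → X2 → ℝ} {D1 D2 l1 l2 : ℝ}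
  {W1 : X → Y → X1 → ℝ} {W2 : X → Y → X1 → X2 → ℝ}

lemma normalizer_pA_pBgYA_pos (hP : IsPMF2 P) (hW1 : IsChan1 W1) (hW2 : IsChan2 W2) {x : X}
    {y : Y} (hxy : P x y ≠ 0) : 0 < normalizer d1 d2 l1 l2 (pA P W1) (pBgYA P W1 W2) x y := by
  obtain ⟨a, ha⟩ := (hW1 x y).exists_ne_zero
  have h := mul_ne_zero hxy ha
  refine sum_pos' (fun a _ => mul_nonneg (pA_nonneg hP hW1 a) (mul_nonneg (exp_nonneg _)
    (normalizer2_nonneg (pBgYA_nonneg hP hW1 hW2) x y a))) ⟨a, mem_univ a, ?_⟩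
  exact mul_pos ((pA_nonneg hP hW1 a).lt_of_ne' (pA_ne_zero hP hW1 h)) (mul_pos (exp_pos _)
    (normalizer2_pos (isPMF_pBgYA hP hW1 hW2 (pYA_ne_zero hP hW1 h)) x))

theorem sum_mul_alpha_mul_le_one (hP : IsPMF2 P) (hd1 : ∀ x a, 0 ≤ d1 x a)
    (hd2 : ∀ x b, 0 ≤ d2 x b) (hdual : DualOpt P d1 d2 D1 D2 l1 l2)
    (hach : Achieves P d1 d2 D1 D2 W1 W2) (a0 : X1) {q : Y → X2 → ℝ} (hq : ∀ y b, 0 ≤ q y b)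
    (hq1 : ∀ y, ∑ b, q y b ≤ 1) :
    ∑ x, ∑ y, P x y * alpha d1 d2 l1 l2 (pA P W1) (pBgYA P W1 W2) x y *
      (exp (-(l1 * d1 x a0)) * ∑ b, q y b * exp (-(l2 * d2 x b))) ≤ 1 := by
  have hW1 := hach.1
  have hW2 := hach.2.1
  have : Nonempty X2 := by
    obtain ⟨x, y, -⟩ := hP.exists_ne_zero
    exact ⟨(hW2 x y a0).exists_ne_zero.choose⟩
  set S := normalizer d1 d2 l1 l2 (pA P W1) (pBgYA P W1 W2)
  set T : X → Y → ℝ := fun x y => exp (-(l1 * d1 x a0)) * ∑ b, q y b * exp (-(l2 * d2 x b))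
  have hT : ∀ x y, 0 ≤ T x y := fun x y =>
    mul_nonneg (exp_nonneg _) (sum_nonneg fun b _ => mul_nonneg (hq y b) (exp_nonneg _))
  have hS : ∀ x y, P x y ≠ 0 → 0 < S x y := fun x y => normalizer_pA_pBgYA_pos hP hW1 hW2
  have hmix : ∀ ε ∈ Set.Ioo (0 : ℝ) 1, ∑ x, ∑ y, P x y * log ((1 - ε) * S x y + ε * T x y) ≤
      ∑ x, ∑ y, P x y * log (S x y) := fun ε hε => by
    obtain ⟨Q1, Q2, hQ1, hQ2, hge⟩ :=
      exists_normalizer_ge_mix (d1 := d1) (d2 := d2) (l1 := l1) (l2 := l2) hP hW1 hW2 a0 hq hq1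
        hε.1.le hε.2.le
    refine le_trans (sum_le_sum fun x _ => sum_le_sum fun y _ => ?_)
      (sum_log_normalizer_le hP hd1 hd2 hdual hach hQ1 hQ2)
    rcases eq_or_ne (P x y) 0 with h | h
    · simp [h]
    refine mul_le_mul_of_nonneg_left (log_le_log ?_ (hge x y)) (hP.1 x y)
    nlinarith [hS x y h, hT x y, hε.1, hε.2]
  have key := sum_mul_div_le_one_of_log_le (p := fun z : X × Y => P z.1 z.2)
    (s := fun z => S z.1 z.2) (t := fun z => T z.1 z.2) (fun z => hP.1 z.1 z.2)
    ((Fintype.sum_prod_type' P).trans hP.2) (fun z => hS z.1 z.2) (fun z => hT z.1 z.2)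
    (fun ε hε => by simpa only [Fintype.sum_prod_type] using hmix ε hε)
  simp only [Fintype.sum_prod_type] at key
  refine le_of_eq_of_le (sum_congr rfl fun x _ => sum_congr rfl fun y _ => ?_) key
  simp only [alpha_eq_inv_normalizer, S, T]
  ring

end Nu

/-- Lemma 2 of the paper: for a pair of test channels achieving
`R_K(P_{XY},D₁,D₂)`, the quantities `ν₁(x̂₁)` and `ν₂(x̂₁, Q_{X̂₂|YX̂₁})` are at most `1`. -/
theorem nu_le_one
    {X Y X1 X2 : Type*} [Fintype X] [Fintype Y] [Fintype X1] [Fintype X2]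
    (P : X → Y → ℝ) (d1 : X → X1 → ℝ) (d2 : X → X2 → ℝ) (D1 D2 l1 l2 : ℝ)
    (hP : IsPMF2 P)
    (hd1 : ∀ x a, 0 ≤ d1 x a) (hd2 : ∀ x b, 0 ≤ d2 x b)
    -- `λ₁*, λ₂*` are dual-optimal multipliers
    (hdual : DualOpt P d1 d2 D1 D2 l1 l2)
    -- a fixed pair of test channels achieving `R_K(P_{XY},D₁,D₂)`
    (W1 : X → Y → X1 → ℝ) (W2 : X → Y → X1 → X2 → ℝ)
    (hach : Achieves P d1 d2 D1 D2 W1 W2) :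
    ∀ a : X1,
      -- ν₁(x̂₁) ≤ 1
      ((∑ x, ∑ y, P x y *
          (alpha d1 d2 l1 l2 (pA P W1) (pBgYA P W1 W2) x y /
            alpha2 d2 l2 (pBgYA P W1 W2) x y a) * Real.exp (-(l1 * d1 x a))) ≤ 1)
      ∧
      -- ν₂(x̂₁, Q_{X̂₂|YX̂₁}) ≤ 1 for every conditional pmf Q_{X̂₂|YX̂₁}
      (∀ Q2 : Y → X1 → X2 → ℝ, (∀ y a', IsPMF (Q2 y a')) →
        (∑ x, ∑ y, ∑ b, P x y * Q2 y a b *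
            alpha d1 d2 l1 l2 (pA P W1) (pBgYA P W1 W2) x y *
            Real.exp (-(l1 * d1 x a) - l2 * d2 x b)) ≤ 1) := by
  intro a
  have hW1 := hach.1
  have hW2 := hach.2.1
  refine ⟨?_, fun Q2 hQ2 => ?_⟩
  · refine le_of_eq_of_le (sum_congr rfl fun x _ => sum_congr rfl fun y _ => ?_)
      (sum_mul_alpha_mul_le_one hP hd1 hd2 hdual hach a (q := fun y b => pBgYA P W1 W2 y a b)
        (fun y => pBgYA_nonneg hP hW1 hW2 y a) (fun y => sum_pBgYA_le_one hP hW1 hW2 y a))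
    rw [alpha2, div_inv_eq_mul]
    ring
  · refine le_of_eq_of_le (sum_congr rfl fun x _ => sum_congr rfl fun y _ => ?_)
      (sum_mul_alpha_mul_le_one hP hd1 hd2 hdual hach a (q := fun y b => Q2 y a b)
        (fun y => (hQ2 y a).1) (fun y => (hQ2 y a).2.le))
    simp only [mul_sum]
    refine sum_congr rfl fun b _ => ?_
    rw [sub_eq_add_neg, exp_add]
    ring

end Kaspi
end

section
/- Fix a pair of test channels (P*_{X̂₁|X}, P*_{X̂₂|XX̂₁}) achieving 𝖱_FY(R₁,D₁,D₂|P_X) (hence satisfying the optimality fixed-point equations), and additionally, for every (y,x̂₁) with P*_{YX̂₁}(y,x̂₁) = 0, choose P*_{X̂₂|YX̂₁}(·|y,x̂₁) to maximize, over conditional pmfs Q_{X̂₂|YX̂₁}, the quantity E_{P_{X|Y=y}}[ β(X,y) · β₂(X,y,x̂₁|Q_{X̂₂|YX̂₁})^{−1/(1+s*)} · exp(−t₁* d₁(X,x̂₁)/(1+s*)) ]. Write β₂(x,y,x̂₁) := β₂(x,y,x̂₁|P*_{X̂₂|YX̂₁}), β(x,y) := β(x,y|P*_{X̂₁},P*_{X̂₂|YX̂₁}),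 ι₁(x,y,x̂₁) := log β(x,y) − (1/(1+s*)) log β₂(x,y,x̂₁), ι₂(x,y,x̂₁) := log β(x,y) + (s*/(1+s*)) log β₂(x,y,x̂₁), w₁(x̂₁) := E_{P_{XY}}[ exp( ι₁(X,Y,x̂₁) − t₁* d₁(X,x̂₁)/(1+s*) ) ], and, for a conditional pmf Q_{X̂₂|YX̂₁}, w₂(x̂₁,Q_{X̂₂|YX̂₁}) := Σ_{x,y,x̂₂} P_{XY}(x,y) Q_{X̂₂|YX̂₁}(x̂₂|y,x̂₁) exp( ι₂(x,y,x̂₁) − t₁* d₁(x,x̂₁)/(1+s*) − t₂* d₂(x,x̂₂) ). Then for every x̂₁ ∈ 𝒳̂₁ and every conditional pmf Q_{X̂₂|YX̂₁}: w₂(x̂₁, Q_{X̂₂|YX̂₁}) ≤ w₁(x̂₁) ≤ 1. -/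
open scoped BigOperators Classical
open Finset

namespace FY

/-- A probability mass function on a finite type. -/
def IsPMF {α : Type*} [Fintype α] (p : α → ℝ) : Prop :=
  (∀ a, 0 ≤ p a) ∧ ∑ a, p a = 1

variable {X Y X1 X2 : Type*} [Fintype X] [Fintype Y] [Fintype X1] [Fintype X2]
  [DecidableEq Y]

/-- A test channel `P_{X̂₁|X}`. -/
def IsChan1 (V : X → X1 → ℝ) : Prop := ∀ x, IsPMF (V x)

/-- A test channel `P_{X̂₂|X X̂₁}`. -/
def IsChan2 (V : X → X1 → X2 → ℝ) : Prop := ∀ x a, IsPMF (V x a)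

/-- The pmf of `Y = g(X)` induced by `P_X` and `g`. -/
noncomputable def pY (P : X → ℝ) (g : X → Y) (y : Y) : ℝ :=
  ∑ x, if g x = y then P x else 0

/-- The reproduction marginal `P_{X̂₁}`. -/
noncomputable def pA (P : X → ℝ) (V1 : X → X1 → ℝ) (a : X1) : ℝ :=
  ∑ x, P x * V1 x a

/-- The joint marginal `P_{Y X̂₁}`. -/
noncomputable def pYA (P : X → ℝ) (g : X → Y) (V1 : X → X1 → ℝ) (y : Y) (a : X1) : ℝ :=
  ∑ x, if g x = y then P x * V1 x a else 0

/-- The joint marginal `P_{Y X̂₁ X̂₂}`. -/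
noncomputable def pYAB (P : X → ℝ) (g : X → Y) (V1 : X → X1 → ℝ) (V2 : X → X1 → X2 → ℝ)
    (y : Y) (a : X1) (b : X2) : ℝ :=
  ∑ x, if g x = y then P x * V1 x a * V2 x a b else 0

/-- The conditional pmf `P_{X̂₂|Y X̂₁}`. -/
noncomputable def pBgYA (P : X → ℝ) (g : X → Y) (V1 : X → X1 → ℝ) (V2 : X → X1 → X2 → ℝ)
    (y : Y) (a : X1) (b : X2) : ℝ :=
  pYAB P g V1 V2 y a b / pYA P g V1 y a

/-- The mutual information `I(X; X̂₁)`. -/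
noncomputable def IX1 (P : X → ℝ) (V1 : X → X1 → ℝ) : ℝ :=
  ∑ x, ∑ a, P x * V1 x a * Real.log (V1 x a / pA P V1 a)

/-- The mutual information `I(X̂₁; Y)`. -/
noncomputable def IAY (P : X → ℝ) (g : X → Y) (V1 : X → X1 → ℝ) : ℝ :=
  ∑ y, ∑ a, pYA P g V1 y a * Real.log (pYA P g V1 y a / (pY P g y * pA P V1 a))

/-- The conditional mutual information `I(X; X̂₁, X̂₂ | Y)`. -/
noncomputable def IXABgY (P : X → ℝ) (g : X → Y) (V1 : X → X1 → ℝ)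
    (V2 : X → X1 → X2 → ℝ) : ℝ :=
  ∑ x, ∑ a, ∑ b, P x * V1 x a * V2 x a b *
    Real.log ((V1 x a * V2 x a b) / (pYAB P g V1 V2 (g x) a b / pY P g (g x)))

/-- The conditional mutual information `I(X; X̂₂ | Y, X̂₁)`. -/
noncomputable def IX2gYA (P : X → ℝ) (g : X → Y) (V1 : X → X1 → ℝ)
    (V2 : X → X1 → X2 → ℝ) : ℝ :=
  ∑ x, ∑ a, ∑ b, P x * V1 x a * V2 x a b *
    Real.log (V2 x a b / pBgYA P g V1 V2 (g x) a b)

/-- Expected first distortion. -/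
noncomputable def Ed1 (P : X → ℝ) (V1 : X → X1 → ℝ) (d1 : X → X1 → ℝ) : ℝ :=
  ∑ x, ∑ a, P x * V1 x a * d1 x a

/-- Expected second distortion. -/
noncomputable def Ed2 (P : X → ℝ) (V1 : X → X1 → ℝ) (V2 : X → X1 → X2 → ℝ)
    (d2 : X → X2 → ℝ) : ℝ :=
  ∑ x, ∑ a, ∑ b, P x * V1 x a * V2 x a b * d2 x b

/-- The minimum sum-rate function `𝖱_FY(R₁,D₁,D₂|P_X)` of the Fu–Yeung problem. -/
noncomputable def RFY (P : X → ℝ) (g : X → Y) (d1 : X → X1 → ℝ) (d2 : X → X2 → ℝ)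
    (R1 D1 D2 : ℝ) : ℝ :=
  sInf { r | ∃ (V1 : X → X1 → ℝ) (V2 : X → X1 → X2 → ℝ),
    IsChan1 V1 ∧ IsChan2 V2 ∧ IX1 P V1 ≤ R1 ∧
    Ed1 P V1 d1 ≤ D1 ∧ Ed2 P V1 V2 d2 ≤ D2 ∧
    r = IAY P g V1 + IXABgY P g V1 V2 }

/-- `(V1,V2)` is a feasible pair achieving `𝖱_FY(R₁,D₁,D₂|P_X)`. -/
def Achieves (P : X → ℝ) (g : X → Y) (d1 : X → X1 → ℝ) (d2 : X → X2 → ℝ)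
    (R1 D1 D2 : ℝ) (V1 : X → X1 → ℝ) (V2 : X → X1 → X2 → ℝ) : Prop :=
  IsChan1 V1 ∧ IsChan2 V2 ∧ IX1 P V1 ≤ R1 ∧
    Ed1 P V1 d1 ≤ D1 ∧ Ed2 P V1 V2 d2 ≤ D2 ∧
    IAY P g V1 + IXABgY P g V1 V2 = RFY P g d1 d2 R1 D1 D2

/-- `(s*,t₁*,t₂*)` are dual-optimal multipliers for `𝖱_FY(R₁,D₁,D₂|P_X)`. -/
def DualOpt (P : X → ℝ) (g : X → Y) (d1 : X → X1 → ℝ) (d2 : X → X2 → ℝ)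
    (R1 D1 D2 s t1 t2 : ℝ) : Prop :=
  0 ≤ s ∧ 0 ≤ t1 ∧ 0 ≤ t2 ∧
  RFY P g d1 d2 R1 D1 D2 = sInf { r | ∃ (V1 : X → X1 → ℝ) (V2 : X → X1 → X2 → ℝ),
    IsChan1 V1 ∧ IsChan2 V2 ∧
    r = (1 + s) * IX1 P V1 + IX2gYA P g V1 V2 + t1 * Ed1 P V1 d1 + t2 * Ed2 P V1 V2 d2
        - s * R1 - t1 * D1 - t2 * D2 }

/-- `β₂(x,y,x̂₁ | Q_{X̂₂|YX̂₁})`. -/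
noncomputable def beta2 (d2 : X → X2 → ℝ) (t2 : ℝ) (Q2 : Y → X1 → X2 → ℝ)
    (x : X) (y : Y) (a : X1) : ℝ :=
  (∑ b, Q2 y a b * Real.exp (-(t2 * d2 x b)))⁻¹

/-- `β(x,y | Q_{X̂₁}, Q_{X̂₂|YX̂₁})`. -/
noncomputable def beta (d1 : X → X1 → ℝ) (d2 : X → X2 → ℝ) (s t1 t2 : ℝ)
    (Q1 : X1 → ℝ) (Q2 : Y → X1 → X2 → ℝ) (x : X) (y : Y) : ℝ :=
  (∑ a, Q1 a *
    Real.exp (-((t1 * d1 x a + Real.log (beta2 d2 t2 Q2 x y a)) / (1 + s))))⁻¹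

/-- The rate-distortion-tilted information density `j_FY(x,y|R₁,D₁,D₂,P_X)`, built from
the marginals `Q1 = P*_{X̂₁}`, `Q2 = P*_{X̂₂|YX̂₁}` of an optimal test-channel pair. -/
noncomputable def jFY (d1 : X → X1 → ℝ) (d2 : X → X2 → ℝ) (s t1 t2 R1 D1 D2 : ℝ)
    (Q1 : X1 → ℝ) (Q2 : Y → X1 → X2 → ℝ) (x : X) (y : Y) : ℝ :=
  (1 + s) * Real.log (beta d1 d2 s t1 t2 Q1 Q2 x y) - s * R1 - t1 * D1 - t2 * D2

/-- The (plain) rate-distortion function `R(P_X, D)`. -/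
noncomputable def Rrd (P : X → ℝ) (d1 : X → X1 → ℝ) (D : ℝ) : ℝ :=
  sInf { r | ∃ V1 : X → X1 → ℝ, IsChan1 V1 ∧ Ed1 P V1 d1 ≤ D ∧ r = IX1 P V1 }

/-- The `D₁`-tilted information density `j(x, D₁|P_X)`, built from the reproduction
marginal `Q1` of an optimal test channel for `R(P_X,D₁)` and the multiplier `t`. -/
noncomputable def jD (d1 : X → X1 → ℝ) (t D1 : ℝ) (Q1 : X1 → ℝ) (x : X) : ℝ :=
  -Real.log (∑ a, Q1 a * Real.exp (-(t * (d1 x a - D1))))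

/-- The Shannon entropy of a pmf. -/
noncomputable def ent {α : Type*} [Fintype α] (p : α → ℝ) : ℝ :=
  -∑ a, p a * Real.log (p a)

/-- The variance of `f(X)` under the pmf `P`. -/
noncomputable def varX (P : X → ℝ) (f : X → ℝ) : ℝ :=
  ∑ x, P x * (f x - ∑ x', P x' * f x') ^ 2

/-- The covariance of `f(X)` and `h(X)` under the pmf `P`. -/
noncomputable def covX (P : X → ℝ) (f h : X → ℝ) : ℝ :=
  ∑ x, P x * (f x - ∑ x', P x' * f x') * (h x - ∑ x', P x' * h x')

end FY

namespace FY

/-!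
The Lagrangian `L(W₁,W₂) = (1+s) I(X;X̂₁) + I(X;X̂₂|Y,X̂₁) + t₁ E d₁ + t₂ E d₂` is minimized by the
optimal test channels, by dual optimality and the chain rule
`I(X̂₁;Y) + I(X;X̂₁X̂₂|Y) = I(X;X̂₁) + I(X;X̂₂|Y,X̂₁)`. Replacing the output laws in `L` by arbitrary
`(Q₁,Q₂)` turns the mutual informations into relative entropies and can only increase `L`;
minimizing over the channels by Gibbs' variational principle (over `x̂₂`, then over `x̂₁`) gives
`-(1+s) E[log β(X,Y|Q₁,Q₂)⁻¹]`. Hence `(P*_{X̂₁}, P*_{X̂₂|YX̂₁})` maximizes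
`(Q₁,Q₂) ↦ E[log β(X,Y|Q₁,Q₂)⁻¹]`.

Both inequalities are first-order conditions of this maximum: moving `P*_{X̂₁}` towards the point
mass at `x̂₁` gives `w₁(x̂₁) ≤ 1`, and moving `P*_{X̂₂|YX̂₁}(·|·,x̂₁)` towards `Q` gives
`w₂(x̂₁,Q) ≤ w₁(x̂₁)`. When `P*_{X̂₁}(x̂₁) = 0` the second move does not change `β`, and the
maximization rule on null sets yields the same first-order condition instead.
-/

open Real

set_option linter.unusedSectionVars false

section General

variable {α : Type*} [Fintype α] {p q : α → ℝ}

theorem mul_le_mul_of_pos_imp {w a b : ℝ} (hw : 0 ≤ w) (h : 0 < w → a ≤ b) :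
    w * a ≤ w * b := by
  rcases hw.eq_or_lt with rfl | hw
  · simp
  · exact mul_le_mul_of_nonneg_left (h hw) hw.le

theorem mul_eq_mul_of_pos_imp {w a b : ℝ} (hw : 0 ≤ w) (h : 0 < w → a = b) :
    w * a = w * b :=
  le_antisymm (mul_le_mul_of_pos_imp hw fun hw => (h hw).le)
    (mul_le_mul_of_pos_imp hw fun hw => (h hw).ge)

theorem exists_pos_of_sum_pos {f : α → ℝ} (h : 0 < ∑ a, f a) :
    ∃ a, 0 < f a := by
  obtain ⟨a, -, ha⟩ := Finset.exists_lt_of_sum_lt (f := fun _ => (0 : ℝ)) (s := univ)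
    (by simpa using h)
  exact ⟨a, ha⟩

theorem IsPMF.exists_pos (hp : IsPMF p) : ∃ a, 0 < p a :=
  exists_pos_of_sum_pos (hp.2 ▸ one_pos)

theorem IsPMF.sum_mul_pos (hp : IsPMF p) {f : α → ℝ} (hf : ∀ a, 0 < f a) :
    0 < ∑ a, p a * f a := by
  obtain ⟨a, ha⟩ := hp.exists_pos
  exact Finset.sum_pos' (fun a _ => mul_nonneg (hp.1 a) (hf a).le)
    ⟨a, mem_univ a, mul_pos ha (hf a)⟩

theorem IsPMF.mix {p' : α → ℝ} (hp : IsPMF p) (hp' : IsPMF p') {ε : ℝ} (h0 : 0 ≤ ε)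
    (h1 : ε ≤ 1) : IsPMF fun a => (1 - ε) * p a + ε * p' a := by
  refine ⟨fun a => add_nonneg (mul_nonneg (by linarith) (hp.1 a)) (mul_nonneg h0 (hp'.1 a)), ?_⟩
  rw [Finset.sum_add_distrib, ← Finset.mul_sum, ← Finset.mul_sum, hp.2, hp'.2]
  ring

theorem neg_log_sum_le_sum_mul_log_div (hp : IsPMF p) (hq : ∀ a, 0 ≤ q a)
    (hpq : ∀ a, 0 < p a → 0 < q a) :
    -log (∑ a, q a) ≤ ∑ a, p a * log (p a / q a) := by
  obtain ⟨a₀, ha₀⟩ := hp.exists_pos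
  have hZ : 0 < ∑ a, q a := Finset.sum_pos' (fun a _ => hq a) ⟨a₀, mem_univ _, hpq a₀ ha₀⟩
  set Z := ∑ a, q a
  -- termwise `log t ≤ t - 1` at `t = q / (p Z)`
  have key : ∀ a, p a * -log Z + p a - q a / Z ≤ p a * log (p a / q a) := by
    intro a
    rcases (hp.1 a).eq_or_lt with hpa | hpa
    · rw [← hpa]
      have := div_nonneg (hq a) hZ.le
      linarith
    have hqa := hpq a hpa
    have h := log_le_sub_one_of_pos (show 0 < q a / (p a * Z) by positivity)
    rw [log_div hqa.ne' (by positivity), log_mul hpa.ne' hZ.ne'] at h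
    rw [log_div hpa.ne' hqa.ne']
    have hlin : p a * (q a / (p a * Z) - 1) = q a / Z - p a := by field_simp
    nlinarith [mul_le_mul_of_nonneg_left h hpa.le]
  calc -log Z = ∑ a, (p a * -log Z + p a - q a / Z) := by
        rw [Finset.sum_sub_distrib, Finset.sum_add_distrib, ← Finset.sum_mul, ← Finset.sum_div,
          hp.2, div_self hZ.ne']
        ring
    _ ≤ _ := Finset.sum_le_sum fun a _ => key a

theorem neg_log_sum_mul_exp_le (hp : IsPMF p) (hq : ∀ a, 0 ≤ q a)
    (hpq : ∀ a, 0 < p a → 0 < q a) (f : α → ℝ) :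
    -log (∑ a, q a * exp (-f a)) ≤ ∑ a, p a * (log (p a / q a) + f a) := by
  refine (neg_log_sum_le_sum_mul_log_div hp (fun a => mul_nonneg (hq a) (exp_pos _).le)
    fun a ha => mul_pos (hpq a ha) (exp_pos _)).trans_eq (Finset.sum_congr rfl fun a _ => ?_)
  refine mul_eq_mul_of_pos_imp (hp.1 a) fun ha => ?_
  have hqa := hpq a ha
  rw [log_div ha.ne' (mul_pos hqa (exp_pos _)).ne', log_mul hqa.ne' (exp_pos _).ne', log_exp,
    log_div ha.ne' hqa.ne']
  ring

theorem sum_tilt_mul_log_div_add_eq (hq : ∀ a, 0 ≤ q a) (f : α → ℝ)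
    (hZ : 0 < ∑ a, q a * exp (-f a)) :
    ∑ a, q a * exp (-f a) / (∑ a', q a' * exp (-f a')) *
      (log (q a * exp (-f a) / (∑ a', q a' * exp (-f a')) / q a) + f a)
      = -log (∑ a, q a * exp (-f a)) := by
  set Z := ∑ a, q a * exp (-f a)
  have hterm : ∀ a, q a * exp (-f a) / Z * (log (q a * exp (-f a) / Z / q a) + f a)
      = q a * exp (-f a) / Z * -log Z := by
    intro a
    rcases (hq a).eq_or_lt with hqa | hqa
    · simp [← hqa]
    congr 1
    rw [mul_div_assoc, mul_div_cancel_left₀ _ hqa.ne', log_div (exp_pos _).ne' hZ.ne',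
      log_exp]
    ring
  rw [Finset.sum_congr rfl fun a _ => hterm a, ← Finset.sum_mul, ← Finset.sum_div,
    div_self hZ.ne', one_mul]

end General

section Calculus

theorem nonpos_of_hasDerivAt_of_forall_le {F : ℝ → ℝ} {c : ℝ} (hF : HasDerivAt F c 0)
    (hle : ∀ ε ∈ Set.Ioo (0 : ℝ) 1, F ε ≤ F 0) : c ≤ 0 := by
  have hslope : Filter.Tendsto (slope F 0) (nhdsWithin 0 (Set.Ioi 0)) (nhds c) :=
    (hasDerivAt_iff_tendsto_slope.mp hF).mono_left
      (nhdsWithin_mono _ fun ε hε => ne_of_gt (α := ℝ) hε)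
  refine le_of_tendsto hslope ?_
  filter_upwards [Ioo_mem_nhdsGT (zero_lt_one' ℝ)] with ε hε
  rw [slope_def_field, sub_zero]
  exact div_nonpos_of_nonpos_of_nonneg (by linarith [hle ε hε]) hε.1.le

theorem hasDerivAt_mix (u e : ℝ) : HasDerivAt (fun ε : ℝ => (1 - ε) * u + ε * e) (e - u) 0 :=
  ((((hasDerivAt_id (0 : ℝ)).const_sub 1).mul_const u).add
    ((hasDerivAt_id (0 : ℝ)).mul_const e)).congr_deriv (by simp; ring)

theorem hasDerivAt_log_mix {u : ℝ} (hu : 0 < u) (e : ℝ) :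
    HasDerivAt (fun ε : ℝ => log ((1 - ε) * u + ε * e)) ((e - u) / u) 0 := by
  simpa using (hasDerivAt_mix u e).log (by simpa using hu.ne')

theorem hasDerivAt_exp_log_mix {m : ℝ} (hm : 0 < m) (v c r : ℝ) :
    HasDerivAt (fun δ : ℝ => exp (-((c - log ((1 - δ) * m + δ * v)) / r)))
      (exp (-((c - log m) / r)) * ((v - m) / m) / r) 0 := by
  have h := (((hasDerivAt_log_mix hm v).const_sub c).div_const r).fun_neg.exp
  simp only [one_mul, sub_zero, zero_mul, add_zero] at h
  exact h.congr_deriv (by ring)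

end Calculus

section Marginals

variable {X Y X1 X2 : Type*} [Fintype X] [Fintype Y] [Fintype X1] [Fintype X2] [DecidableEq Y]
  {P : X → ℝ} {g : X → Y} {W1 : X → X1 → ℝ} {W2 : X → X1 → X2 → ℝ}

theorem sum_ite_mul_eq (g : X → Y) (c : ℝ) (F : Y → ℝ) (x : X) :
    ∑ y, (if g x = y then c else 0) * F y = c * F (g x) := by
  simp [ite_mul]

theorem sum_fiber_mul (g : X → Y) (w : X → ℝ) (F : Y → ℝ) :
    ∑ y, (∑ x, if g x = y then w x else 0) * F y = ∑ x, w x * F (g x) := by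
  simp only [Finset.sum_mul, ite_mul, zero_mul]
  rw [Finset.sum_comm]
  simp

theorem sum_pYA_mul (F : Y → ℝ) (a : X1) :
    ∑ y, pYA P g W1 y a * F y = ∑ x, P x * W1 x a * F (g x) :=
  sum_fiber_mul g (fun x => P x * W1 x a) F

theorem sum_pYAB_mul (F : Y → ℝ) (a : X1) (b : X2) :
    ∑ y, pYAB P g W1 W2 y a b * F y = ∑ x, P x * W1 x a * W2 x a b * F (g x) :=
  sum_fiber_mul g (fun x => P x * W1 x a * W2 x a b) F

theorem sum_mul_chan2_mul (hW2 : IsChan2 W2) (x : X) (a : X1) (c F : ℝ) :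
    ∑ b, c * W2 x a b * F = c * F := by
  rw [← Finset.sum_mul, ← Finset.mul_sum, (hW2 x a).2, mul_one]

theorem mul_le_pA (hP : IsPMF P) (hW1 : IsChan1 W1) (x : X) (a : X1) :
    P x * W1 x a ≤ pA P W1 a :=
  Finset.single_le_sum (f := fun x => P x * W1 x a)
    (fun x _ => mul_nonneg (hP.1 x) ((hW1 x).1 a)) (mem_univ x)

theorem isPMF_pA (hP : IsPMF P) (hW1 : IsChan1 W1) : IsPMF (pA P W1) := by
  refine ⟨fun a => Finset.sum_nonneg fun x _ => mul_nonneg (hP.1 x) ((hW1 x).1 a), ?_⟩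
  rw [← hP.2]
  unfold pA
  rw [Finset.sum_comm]
  exact Finset.sum_congr rfl fun x _ => by rw [← Finset.mul_sum, (hW1 x).2, mul_one]

theorem pYA_nonneg (hP : IsPMF P) (hW1 : IsChan1 W1) (y : Y) (a : X1) :
    0 ≤ pYA P g W1 y a :=
  Finset.sum_nonneg fun x _ => by
    split_ifs
    exacts [mul_nonneg (hP.1 x) ((hW1 x).1 a), le_rfl]

theorem mul_le_pYA (hP : IsPMF P) (hW1 : IsChan1 W1) (x : X) (a : X1) :
    P x * W1 x a ≤ pYA P g W1 (g x) a := by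
  have := Finset.single_le_sum (f := fun x' => if g x' = g x then P x' * W1 x' a else 0)
    (fun x' _ => by split_ifs; exacts [mul_nonneg (hP.1 x') ((hW1 x').1 a), le_rfl])
    (mem_univ x)
  simpa [pYA] using this

theorem pYA_le_pA (hP : IsPMF P) (hW1 : IsChan1 W1) (y : Y) (a : X1) :
    pYA P g W1 y a ≤ pA P W1 a :=
  Finset.sum_le_sum fun x _ => by
    split_ifs
    exacts [le_rfl, mul_nonneg (hP.1 x) ((hW1 x).1 a)]

theorem pYAB_nonneg (hP : IsPMF P) (hW1 : IsChan1 W1) (hW2 : IsChan2 W2) (y : Y) (a : X1)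
    (b : X2) : 0 ≤ pYAB P g W1 W2 y a b :=
  Finset.sum_nonneg fun x _ => by
    split_ifs
    exacts [mul_nonneg (mul_nonneg (hP.1 x) ((hW1 x).1 a)) ((hW2 x a).1 b), le_rfl]

theorem mul_le_pYAB (hP : IsPMF P) (hW1 : IsChan1 W1) (hW2 : IsChan2 W2) (x : X) (a : X1)
    (b : X2) : P x * W1 x a * W2 x a b ≤ pYAB P g W1 W2 (g x) a b := by
  have := Finset.single_le_sum
    (f := fun x' => if g x' = g x then P x' * W1 x' a * W2 x' a b else 0)
    (fun x' _ => by
      split_ifs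
      exacts [mul_nonneg (mul_nonneg (hP.1 x') ((hW1 x').1 a)) ((hW2 x' a).1 b), le_rfl])
    (mem_univ x)
  simpa [pYAB] using this

theorem sum_pYAB (hW2 : IsChan2 W2) (y : Y) (a : X1) :
    ∑ b, pYAB P g W1 W2 y a b = pYA P g W1 y a := by
  unfold pYAB pYA
  rw [Finset.sum_comm]
  refine Finset.sum_congr rfl fun x _ => ?_
  split_ifs
  exacts [by rw [← Finset.mul_sum, (hW2 x a).2, mul_one], Finset.sum_const_zero]

theorem isPMF_pBgYA (hP : IsPMF P) (hW1 : IsChan1 W1) (hW2 : IsChan2 W2) {y : Y} {a : X1}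
    (h : 0 < pYA P g W1 y a) : IsPMF (pBgYA P g W1 W2 y a) :=
  ⟨fun b => div_nonneg (pYAB_nonneg hP hW1 hW2 y a b) h.le, by
    simp only [pBgYA, ← Finset.sum_div, sum_pYAB hW2, div_self h.ne']⟩

theorem pYA_mul_pBgYA (hP : IsPMF P) (hW1 : IsChan1 W1) (hW2 : IsChan2 W2) (y : Y) (a : X1)
    (b : X2) : pYA P g W1 y a * pBgYA P g W1 W2 y a b = pYAB P g W1 W2 y a b := by
  rcases (pYA_nonneg hP hW1 y a).eq_or_lt with h | h
  · have hle : pYAB P g W1 W2 y a b ≤ pYA P g W1 y a := by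
      rw [← sum_pYAB hW2]
      exact Finset.single_le_sum (fun b _ => pYAB_nonneg hP hW1 hW2 y a b) (mem_univ b)
    rw [← h, zero_mul]
    linarith [pYAB_nonneg (g := g) hP hW1 hW2 y a b]
  · exact mul_div_cancel₀ _ h.ne'

end Marginals

section Information

variable {X Y X1 X2 : Type*} [Fintype X] [Fintype Y] [Fintype X1] [Fintype X2] [DecidableEq Y]
  {P : X → ℝ} {g : X → Y} {W1 : X → X1 → ℝ} {W2 : X → X1 → X2 → ℝ}

theorem IX1_nonneg (hP : IsPMF P) (hW1 : IsChan1 W1) : 0 ≤ IX1 P W1 := by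
  have hpA := isPMF_pA hP hW1
  refine Finset.sum_nonneg fun x _ => ?_
  have h := mul_le_mul_of_pos_imp (hP.1 x) (a := 0) fun hx => by
    simpa [hpA.2] using neg_log_sum_le_sum_mul_log_div (hW1 x) hpA.1
      fun a ha => (mul_pos hx ha).trans_le (mul_le_pA hP hW1 x a)
  simpa [Finset.mul_sum, mul_assoc] using h

theorem IX2gYA_nonneg (hP : IsPMF P) (hW1 : IsChan1 W1) (hW2 : IsChan2 W2) :
    0 ≤ IX2gYA P g W1 W2 := by
  refine Finset.sum_nonneg fun x _ => Finset.sum_nonneg fun a _ => ?_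
  have h := mul_le_mul_of_pos_imp (mul_nonneg (hP.1 x) ((hW1 x).1 a)) (a := 0) fun hxa => by
    have hy := hxa.trans_le (mul_le_pYA (g := g) hP hW1 x a)
    have hB := isPMF_pBgYA hP hW1 hW2 hy
    simpa [hB.2] using neg_log_sum_le_sum_mul_log_div (hW2 x a) hB.1 fun b hb =>
      div_pos ((mul_pos hxa hb).trans_le (mul_le_pYAB hP hW1 hW2 x a b)) hy
  simpa [Finset.mul_sum, mul_assoc] using h

theorem IX1_le_sum_mul_log_div (hP : IsPMF P) (hW1 : IsChan1 W1) {Q1 : X1 → ℝ}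
    (hQ1 : IsPMF Q1) (hdom : ∀ x a, 0 < P x → 0 < W1 x a → 0 < Q1 a) :
    IX1 P W1 ≤ ∑ x, ∑ a, P x * W1 x a * log (W1 x a / Q1 a) := by
  have hpA := isPMF_pA hP hW1
  have hgibbs : 0 ≤ ∑ a, pA P W1 a * log (pA P W1 a / Q1 a) := by
    simpa [hQ1.2] using neg_log_sum_le_sum_mul_log_div hpA hQ1.1 fun a ha => by
      obtain ⟨x, hx⟩ := exists_pos_of_sum_pos (f := fun x => P x * W1 x a) ha
      exact hdom x a (pos_of_mul_pos_left hx ((hW1 x).1 a)) (pos_of_mul_pos_right hx (hP.1 x))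
  have hsplit : ∑ x, ∑ a, P x * W1 x a * log (W1 x a / Q1 a)
      = IX1 P W1 + ∑ x, ∑ a, P x * W1 x a * log (pA P W1 a / Q1 a) := by
    rw [IX1, ← Finset.sum_add_distrib]
    refine Finset.sum_congr rfl fun x _ => ?_
    rw [← Finset.sum_add_distrib]
    refine Finset.sum_congr rfl fun a _ => ?_
    rw [← mul_add]
    refine mul_eq_mul_of_pos_imp (mul_nonneg (hP.1 x) ((hW1 x).1 a)) fun h => ?_
    have hw := pos_of_mul_pos_right h (hP.1 x)
    have hq := hdom x a (pos_of_mul_pos_left h ((hW1 x).1 a)) hw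
    have hp := h.trans_le (mul_le_pA hP hW1 x a)
    rw [log_div hw.ne' hq.ne', log_div hw.ne' hp.ne', log_div hp.ne' hq.ne']
    ring
  have hregroup : ∑ x, ∑ a, P x * W1 x a * log (pA P W1 a / Q1 a)
      = ∑ a, pA P W1 a * log (pA P W1 a / Q1 a) := by
    rw [Finset.sum_comm]
    exact Finset.sum_congr rfl fun a _ => by rw [← Finset.sum_mul]; rfl
  linarith

theorem sum_mul_log_pBgYA_div_nonneg (hP : IsPMF P) (hW1 : IsChan1 W1) (hW2 : IsChan2 W2)
    {Q2 : Y → X1 → X2 → ℝ} (hQ2 : ∀ y a, IsPMF (Q2 y a))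
    (hdom : ∀ x a b, 0 < P x → 0 < W1 x a → 0 < W2 x a b → 0 < Q2 (g x) a b) :
    0 ≤ ∑ x, ∑ a, ∑ b, P x * W1 x a * W2 x a b *
      log (pBgYA P g W1 W2 (g x) a b / Q2 (g x) a b) := by
  set pB := pBgYA P g W1 W2
  have hregroup : ∑ a, ∑ y, pYA P g W1 y a * ∑ b, pB y a b * log (pB y a b / Q2 y a b)
      = ∑ x, ∑ a, ∑ b, P x * W1 x a * W2 x a b * log (pB (g x) a b / Q2 (g x) a b) := by
    calc _ = ∑ a, ∑ b, ∑ y, pYAB P g W1 W2 y a b * log (pB y a b / Q2 y a b) := by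
          refine Finset.sum_congr rfl fun a _ => ?_
          rw [Finset.sum_comm]
          simp only [Finset.mul_sum, ← mul_assoc, pB, pYA_mul_pBgYA hP hW1 hW2]
      _ = ∑ a, ∑ x, ∑ b, P x * W1 x a * W2 x a b * log (pB (g x) a b / Q2 (g x) a b) := by
          refine Finset.sum_congr rfl fun a _ => ?_
          simp only [sum_pYAB_mul]
          exact Finset.sum_comm
      _ = _ := Finset.sum_comm
  rw [← hregroup]
  refine Finset.sum_nonneg fun a _ => Finset.sum_nonneg fun y _ => ?_
  refine (mul_le_mul_of_pos_imp (pYA_nonneg hP hW1 y a) (a := 0) fun hy => ?_).trans_eq' (by simp)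
  simpa [(hQ2 y a).2] using neg_log_sum_le_sum_mul_log_div (isPMF_pBgYA hP hW1 hW2 hy)
    (hQ2 y a).1 fun b hb => by
      have hpos : 0 < pYAB P g W1 W2 y a b := by
        rw [← pYA_mul_pBgYA hP hW1 hW2]; exact mul_pos hy hb
      obtain ⟨x, hx⟩ := exists_pos_of_sum_pos
        (f := fun x => if g x = y then P x * W1 x a * W2 x a b else 0) hpos
      split_ifs at hx with hgx
      · subst hgx
        have hxa := pos_of_mul_pos_left hx ((hW2 x a).1 b)
        exact hdom x a b (pos_of_mul_pos_left hxa ((hW1 x).1 a))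
          (pos_of_mul_pos_right hxa (hP.1 x)) (pos_of_mul_pos_right hx hxa.le)
      · exact absurd hx (lt_irrefl 0)

theorem IX2gYA_le_sum_mul_log_div (hP : IsPMF P) (hW1 : IsChan1 W1) (hW2 : IsChan2 W2)
    {Q2 : Y → X1 → X2 → ℝ} (hQ2 : ∀ y a, IsPMF (Q2 y a))
    (hdom : ∀ x a b, 0 < P x → 0 < W1 x a → 0 < W2 x a b → 0 < Q2 (g x) a b) :
    IX2gYA P g W1 W2 ≤ ∑ x, ∑ a, ∑ b, P x * W1 x a * W2 x a b * log (W2 x a b / Q2 (g x) a b) := by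
  have hsplit : ∑ x, ∑ a, ∑ b, P x * W1 x a * W2 x a b * log (W2 x a b / Q2 (g x) a b)
      = IX2gYA P g W1 W2 + ∑ x, ∑ a, ∑ b, P x * W1 x a * W2 x a b *
          log (pBgYA P g W1 W2 (g x) a b / Q2 (g x) a b) := by
    rw [IX2gYA, ← Finset.sum_add_distrib]
    refine Finset.sum_congr rfl fun x _ => ?_
    rw [← Finset.sum_add_distrib]
    refine Finset.sum_congr rfl fun a _ => ?_
    rw [← Finset.sum_add_distrib]
    refine Finset.sum_congr rfl fun b _ => ?_
    rw [← mul_add]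
    refine mul_eq_mul_of_pos_imp
      (mul_nonneg (mul_nonneg (hP.1 x) ((hW1 x).1 a)) ((hW2 x a).1 b)) fun h => ?_
    have hxa := pos_of_mul_pos_left h ((hW2 x a).1 b)
    have hw := pos_of_mul_pos_right h hxa.le
    have hq := hdom x a b (pos_of_mul_pos_left hxa ((hW1 x).1 a))
      (pos_of_mul_pos_right hxa (hP.1 x)) hw
    have hp : 0 < pBgYA P g W1 W2 (g x) a b :=
      div_pos (h.trans_le (mul_le_pYAB hP hW1 hW2 x a b))
        (hxa.trans_le (mul_le_pYA hP hW1 x a))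
    rw [log_div hw.ne' hq.ne', log_div hw.ne' hp.ne', log_div hp.ne' hq.ne']
    ring
  linarith [sum_mul_log_pBgYA_div_nonneg hP hW1 hW2 hQ2 hdom]

theorem IAY_add_IXABgY (hP : IsPMF P) (hpY : ∀ y, 0 < pY P g y) (hW1 : IsChan1 W1)
    (hW2 : IsChan2 W2) :
    IAY P g W1 + IXABgY P g W1 W2 = IX1 P W1 + IX2gYA P g W1 W2 := by
  have hIAY : IAY P g W1 = ∑ x, ∑ a, ∑ b, P x * W1 x a * W2 x a b *
      log (pYA P g W1 (g x) a / (pY P g (g x) * pA P W1 a)) := by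
    rw [IAY, Finset.sum_comm]
    simp only [sum_pYA_mul, sum_mul_chan2_mul hW2]
    exact Finset.sum_comm
  have hIX1 : IX1 P W1 = ∑ x, ∑ a, ∑ b, P x * W1 x a * W2 x a b * log (W1 x a / pA P W1 a) := by
    simp only [IX1, sum_mul_chan2_mul hW2]
  rw [hIAY, hIX1, IXABgY, IX2gYA]
  simp only [← Finset.sum_add_distrib]
  refine Finset.sum_congr rfl fun x _ => Finset.sum_congr rfl fun a _ =>
    Finset.sum_congr rfl fun b _ => ?_
  rw [← mul_add, ← mul_add]
  refine mul_eq_mul_of_pos_imp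
    (mul_nonneg (mul_nonneg (hP.1 x) ((hW1 x).1 a)) ((hW2 x a).1 b)) fun h => ?_
  have hxa := pos_of_mul_pos_left h ((hW2 x a).1 b)
  have h2 := pos_of_mul_pos_right h hxa.le
  have h1 := pos_of_mul_pos_right hxa (hP.1 x)
  have hA := hxa.trans_le (mul_le_pA hP hW1 x a)
  have hYA := hxa.trans_le (mul_le_pYA (g := g) hP hW1 x a)
  have hYAB := h.trans_le (mul_le_pYAB (g := g) hP hW1 hW2 x a b)
  have hY := hpY (g x)
  simp only [pBgYA, log_div, log_mul, h1.ne', h2.ne', hA.ne', hYA.ne', hYAB.ne', hY.ne', ne_eq,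
    mul_eq_zero, div_eq_zero_iff, or_self, not_false_eq_true]
  ring

end Information

section Lagrangian

variable {X Y X1 X2 : Type*} [Fintype X] [Fintype Y] [Fintype X1] [Fintype X2] [DecidableEq Y]
  {P : X → ℝ} {g : X → Y} {d1 : X → X1 → ℝ} {d2 : X → X2 → ℝ} {R1 D1 D2 s t1 t2 : ℝ}
  {V1 W1 : X → X1 → ℝ} {V2 W2 : X → X1 → X2 → ℝ}

noncomputable def lagrangian (P : X → ℝ) (g : X → Y) (d1 : X → X1 → ℝ) (d2 : X → X2 → ℝ)
    (s t1 t2 : ℝ) (W1 : X → X1 → ℝ) (W2 : X → X1 → X2 → ℝ) : ℝ :=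
  (1 + s) * IX1 P W1 + IX2gYA P g W1 W2 + t1 * Ed1 P W1 d1 + t2 * Ed2 P W1 W2 d2

theorem lagrangian_nonneg (hP : IsPMF P) (hd1 : ∀ x a, 0 ≤ d1 x a) (hd2 : ∀ x b, 0 ≤ d2 x b)
    (hs : 0 ≤ s) (ht1 : 0 ≤ t1) (ht2 : 0 ≤ t2) (hW1 : IsChan1 W1) (hW2 : IsChan2 W2) :
    0 ≤ lagrangian P g d1 d2 s t1 t2 W1 W2 := by
  have hE1 : 0 ≤ Ed1 P W1 d1 := Finset.sum_nonneg fun x _ => Finset.sum_nonneg fun a _ =>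
    mul_nonneg (mul_nonneg (hP.1 x) ((hW1 x).1 a)) (hd1 x a)
  have hE2 : 0 ≤ Ed2 P W1 W2 d2 := Finset.sum_nonneg fun x _ => Finset.sum_nonneg fun a _ =>
    Finset.sum_nonneg fun b _ =>
      mul_nonneg (mul_nonneg (mul_nonneg (hP.1 x) ((hW1 x).1 a)) ((hW2 x a).1 b)) (hd2 x b)
  have := IX1_nonneg hP hW1
  have := IX2gYA_nonneg (g := g) hP hW1 hW2
  unfold lagrangian
  positivity

theorem lagrangian_le_of_achieves (hP : IsPMF P) (hpY : ∀ y, 0 < pY P g y)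
    (hd1 : ∀ x a, 0 ≤ d1 x a) (hd2 : ∀ x b, 0 ≤ d2 x b)
    (hdual : DualOpt P g d1 d2 R1 D1 D2 s t1 t2) (hach : Achieves P g d1 d2 R1 D1 D2 V1 V2)
    (hW1 : IsChan1 W1) (hW2 : IsChan2 W2) :
    lagrangian P g d1 d2 s t1 t2 V1 V2 ≤ lagrangian P g d1 d2 s t1 t2 W1 W2 := by
  obtain ⟨hs, ht1, ht2, hRFY⟩ := hdual
  obtain ⟨hV1, hV2, hIR, hE1, hE2, hval⟩ := hach
  have hle : RFY P g d1 d2 R1 D1 D2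
      ≤ lagrangian P g d1 d2 s t1 t2 W1 W2 - s * R1 - t1 * D1 - t2 * D2 := by
    rw [hRFY]
    refine csInf_le ⟨-(s * R1) - t1 * D1 - t2 * D2, ?_⟩ ⟨W1, W2, hW1, hW2, rfl⟩
    rintro r ⟨U1, U2, hU1, hU2, rfl⟩
    have h := lagrangian_nonneg (g := g) hP hd1 hd2 hs ht1 ht2 hU1 hU2
    unfold lagrangian at h
    linarith
  have hchain := IAY_add_IXABgY hP hpY hV1 hV2
  unfold lagrangian at *
  linarith [mul_le_mul_of_nonneg_left hIR hs, mul_le_mul_of_nonneg_left hE1 ht1,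
    mul_le_mul_of_nonneg_left hE2 ht2]

end Lagrangian

section Tilt

variable {X Y X1 X2 : Type*} [Fintype X] [Fintype Y] [Fintype X1] [Fintype X2] [DecidableEq Y]
  {P : X → ℝ} {g : X → Y} {d1 : X → X1 → ℝ} {d2 : X → X2 → ℝ} {s t1 t2 : ℝ}
  {W1 : X → X1 → ℝ} {W2 : X → X1 → X2 → ℝ} {Q1 : X1 → ℝ} {Q2 : Y → X1 → X2 → ℝ}

noncomputable def relLagrangianAt (g : X → Y) (d1 : X → X1 → ℝ) (d2 : X → X2 → ℝ)
    (s t1 t2 : ℝ) (Q1 : X1 → ℝ) (Q2 : Y → X1 → X2 → ℝ) (W1 : X → X1 → ℝ)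
    (W2 : X → X1 → X2 → ℝ) (x : X) : ℝ :=
  ∑ a, W1 x a * ((1 + s) * log (W1 x a / Q1 a) + t1 * d1 x a +
    ∑ b, W2 x a b * (log (W2 x a b / Q2 (g x) a b) + t2 * d2 x b))

noncomputable def relLagrangian (P : X → ℝ) (g : X → Y) (d1 : X → X1 → ℝ) (d2 : X → X2 → ℝ)
    (s t1 t2 : ℝ) (Q1 : X1 → ℝ) (Q2 : Y → X1 → X2 → ℝ) (W1 : X → X1 → ℝ)
    (W2 : X → X1 → X2 → ℝ) : ℝ :=
  ∑ x, P x * relLagrangianAt g d1 d2 s t1 t2 Q1 Q2 W1 W2 x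

theorem relLagrangian_eq :
    relLagrangian P g d1 d2 s t1 t2 Q1 Q2 W1 W2
      = (1 + s) * ∑ x, ∑ a, P x * W1 x a * log (W1 x a / Q1 a)
        + ∑ x, ∑ a, ∑ b, P x * W1 x a * W2 x a b * log (W2 x a b / Q2 (g x) a b)
        + t1 * Ed1 P W1 d1 + t2 * Ed2 P W1 W2 d2 := by
  unfold relLagrangian relLagrangianAt Ed1 Ed2
  simp only [Finset.mul_sum, mul_add, Finset.sum_add_distrib, mul_comm, mul_left_comm, mul_assoc]
  ring

noncomputable def beta2Inv (g : X → Y) (d2 : X → X2 → ℝ) (t2 : ℝ) (Q2 : Y → X1 → X2 → ℝ)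
    (x : X) (a : X1) : ℝ :=
  ∑ b, Q2 (g x) a b * exp (-(t2 * d2 x b))

noncomputable def weight1 (g : X → Y) (d1 : X → X1 → ℝ) (d2 : X → X2 → ℝ) (s t1 t2 : ℝ)
    (Q2 : Y → X1 → X2 → ℝ) (x : X) (a : X1) : ℝ :=
  exp (-((t1 * d1 x a - log (beta2Inv g d2 t2 Q2 x a)) / (1 + s)))

noncomputable def betaInv (g : X → Y) (d1 : X → X1 → ℝ) (d2 : X → X2 → ℝ) (s t1 t2 : ℝ)
    (Q1 : X1 → ℝ) (Q2 : Y → X1 → X2 → ℝ) (x : X) : ℝ :=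
  ∑ a, Q1 a * weight1 g d1 d2 s t1 t2 Q2 x a

noncomputable def tilt2 (g : X → Y) (d2 : X → X2 → ℝ) (t2 : ℝ) (Q2 : Y → X1 → X2 → ℝ) :
    X → X1 → X2 → ℝ :=
  fun x a b => Q2 (g x) a b * exp (-(t2 * d2 x b)) / beta2Inv g d2 t2 Q2 x a

noncomputable def tilt1 (g : X → Y) (d1 : X → X1 → ℝ) (d2 : X → X2 → ℝ) (s t1 t2 : ℝ)
    (Q1 : X1 → ℝ) (Q2 : Y → X1 → X2 → ℝ) : X → X1 → ℝ :=
  fun x a => Q1 a * weight1 g d1 d2 s t1 t2 Q2 x a / betaInv g d1 d2 s t1 t2 Q1 Q2 x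

theorem log_beta2 (x : X) (a : X1) :
    log (beta2 d2 t2 Q2 x (g x) a) = -log (beta2Inv g d2 t2 Q2 x a) :=
  log_inv _

theorem beta_eq_inv_betaInv (x : X) :
    beta d1 d2 s t1 t2 Q1 Q2 x (g x) = (betaInv g d1 d2 s t1 t2 Q1 Q2 x)⁻¹ := by
  simp only [beta, betaInv, weight1, log_beta2, sub_eq_add_neg]

theorem beta2Inv_pos (hQ2 : ∀ y a, IsPMF (Q2 y a)) (x : X) (a : X1) :
    0 < beta2Inv g d2 t2 Q2 x a :=
  (hQ2 _ a).sum_mul_pos fun _ => exp_pos _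

theorem betaInv_pos (hQ1 : IsPMF Q1) (x : X) : 0 < betaInv g d1 d2 s t1 t2 Q1 Q2 x :=
  hQ1.sum_mul_pos fun _ => exp_pos _

theorem isChan2_tilt2 (hQ2 : ∀ y a, IsPMF (Q2 y a)) : IsChan2 (tilt2 g d2 t2 Q2) := fun x a =>
  ⟨fun b => div_nonneg (mul_nonneg ((hQ2 _ a).1 b) (exp_pos _).le) (beta2Inv_pos hQ2 x a).le,
    by simp only [tilt2]; rw [← Finset.sum_div]; exact div_self (beta2Inv_pos hQ2 x a).ne'⟩

theorem isChan1_tilt1 (hQ1 : IsPMF Q1) : IsChan1 (tilt1 g d1 d2 s t1 t2 Q1 Q2) := fun x =>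
  ⟨fun a => div_nonneg (mul_nonneg (hQ1.1 a) (exp_pos _).le) (betaInv_pos hQ1 x).le,
    by simp only [tilt1]; rw [← Finset.sum_div]; exact div_self (betaInv_pos hQ1 x).ne'⟩

theorem pos_of_tilt2_pos (hQ2 : ∀ y a, IsPMF (Q2 y a)) {x : X} {a : X1} {b : X2}
    (h : 0 < tilt2 g d2 t2 Q2 x a b) : 0 < Q2 (g x) a b :=
  pos_of_mul_pos_left ((div_pos_iff_of_pos_right (beta2Inv_pos hQ2 x a)).1 h) (exp_pos _).le

theorem pos_of_tilt1_pos (hQ1 : IsPMF Q1) {x : X} {a : X1}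
    (h : 0 < tilt1 g d1 d2 s t1 t2 Q1 Q2 x a) : 0 < Q1 a :=
  pos_of_mul_pos_left ((div_pos_iff_of_pos_right (betaInv_pos hQ1 x)).1 h) (exp_pos _).le

theorem neg_log_betaInv_le_relLagrangianAt (hs : 0 < 1 + s) {x : X} (hW1 : IsPMF (W1 x))
    (hW2 : ∀ a, IsPMF (W2 x a)) (hQ1 : ∀ a, 0 ≤ Q1 a) (hQ2 : ∀ a b, 0 ≤ Q2 (g x) a b)
    (hdom1 : ∀ a, 0 < W1 x a → 0 < Q1 a)
    (hdom2 : ∀ a, 0 < W1 x a → ∀ b, 0 < W2 x a b → 0 < Q2 (g x) a b) :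
    -(1 + s) * log (betaInv g d1 d2 s t1 t2 Q1 Q2 x)
      ≤ relLagrangianAt g d1 d2 s t1 t2 Q1 Q2 W1 W2 x := by
  set f := fun a => (t1 * d1 x a - log (beta2Inv g d2 t2 Q2 x a)) / (1 + s)
  calc -(1 + s) * log (betaInv g d1 d2 s t1 t2 Q1 Q2 x)
      = (1 + s) * -log (∑ a, Q1 a * exp (-f a)) := by rw [neg_mul, mul_neg]; rfl
    _ ≤ (1 + s) * ∑ a, W1 x a * (log (W1 x a / Q1 a) + f a) :=
      mul_le_mul_of_nonneg_left (neg_log_sum_mul_exp_le hW1 hQ1 hdom1 f) hs.le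
    _ = ∑ a, W1 x a * ((1 + s) * log (W1 x a / Q1 a) + t1 * d1 x a
          - log (beta2Inv g d2 t2 Q2 x a)) := by
      rw [Finset.mul_sum]
      refine Finset.sum_congr rfl fun a _ => ?_
      simp only [f]
      field_simp
      ring
    _ ≤ _ := Finset.sum_le_sum fun a _ => mul_le_mul_of_pos_imp (hW1.1 a) fun ha => by
      have h : -log (beta2Inv g d2 t2 Q2 x a) ≤ _ :=
        neg_log_sum_mul_exp_le (hW2 a) (hQ2 a) (hdom2 a ha) fun b => t2 * d2 x b
      linarith

theorem relLagrangianAt_tilt (hs : 0 < 1 + s) (hQ1 : IsPMF Q1) (hQ2 : ∀ y a, IsPMF (Q2 y a))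
    (x : X) :
    relLagrangianAt g d1 d2 s t1 t2 Q1 Q2 (tilt1 g d1 d2 s t1 t2 Q1 Q2) (tilt2 g d2 t2 Q2) x
      = -(1 + s) * log (betaInv g d1 d2 s t1 t2 Q1 Q2 x) := by
  set f := fun a => (t1 * d1 x a - log (beta2Inv g d2 t2 Q2 x a)) / (1 + s)
  have hinner : ∀ a, ∑ b, tilt2 g d2 t2 Q2 x a b *
      (log (tilt2 g d2 t2 Q2 x a b / Q2 (g x) a b) + t2 * d2 x b)
        = -log (beta2Inv g d2 t2 Q2 x a) := fun a =>
    sum_tilt_mul_log_div_add_eq (hQ2 _ a).1 (fun b => t2 * d2 x b) (beta2Inv_pos hQ2 x a)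
  have houter : ∑ a, tilt1 g d1 d2 s t1 t2 Q1 Q2 x a *
      (log (tilt1 g d1 d2 s t1 t2 Q1 Q2 x a / Q1 a) + f a)
        = -log (betaInv g d1 d2 s t1 t2 Q1 Q2 x) :=
    sum_tilt_mul_log_div_add_eq hQ1.1 f (betaInv_pos hQ1 x)
  rw [relLagrangianAt, neg_mul, ← mul_neg, ← houter, Finset.mul_sum]
  refine Finset.sum_congr rfl fun a _ => ?_
  rw [hinner]
  simp only [f]
  field_simp
  ring

end Tilt

section Optimality

variable {X Y X1 X2 : Type*} [Fintype X] [Fintype Y] [Fintype X1] [Fintype X2] [DecidableEq Y]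
  {P : X → ℝ} {g : X → Y} {d1 : X → X1 → ℝ} {d2 : X → X2 → ℝ} {R1 D1 D2 s t1 t2 : ℝ}
  {V1 W1 : X → X1 → ℝ} {V2 W2 : X → X1 → X2 → ℝ} {Q1 : X1 → ℝ}
  {Q2 Q2s : Y → X1 → X2 → ℝ}

theorem neg_sum_log_betaInv_le_relLagrangian (hs : 0 < 1 + s) (hP : IsPMF P)
    (hW1 : IsChan1 W1) (hW2 : IsChan2 W2) (hQ1 : ∀ a, 0 ≤ Q1 a) (hQ2 : ∀ y a b, 0 ≤ Q2 y a b)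
    (hdom1 : ∀ x a, 0 < P x → 0 < W1 x a → 0 < Q1 a)
    (hdom2 : ∀ x a b, 0 < P x → 0 < W1 x a → 0 < W2 x a b → 0 < Q2 (g x) a b) :
    -(1 + s) * ∑ x, P x * log (betaInv g d1 d2 s t1 t2 Q1 Q2 x)
      ≤ relLagrangian P g d1 d2 s t1 t2 Q1 Q2 W1 W2 := by
  rw [Finset.mul_sum]
  refine Finset.sum_le_sum fun x _ => ?_
  rw [mul_left_comm]
  exact mul_le_mul_of_pos_imp (hP.1 x) fun hx =>
    neg_log_betaInv_le_relLagrangianAt hs (hW1 x) (hW2 x) hQ1 (hQ2 (g x)) (hdom1 x · hx)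
      fun a ha b hb => hdom2 x a b hx ha hb

theorem relLagrangian_tilt (hs : 0 < 1 + s) (hQ1 : IsPMF Q1) (hQ2 : ∀ y a, IsPMF (Q2 y a)) :
    relLagrangian P g d1 d2 s t1 t2 Q1 Q2 (tilt1 g d1 d2 s t1 t2 Q1 Q2) (tilt2 g d2 t2 Q2)
      = -(1 + s) * ∑ x, P x * log (betaInv g d1 d2 s t1 t2 Q1 Q2 x) := by
  rw [relLagrangian, Finset.mul_sum]
  exact Finset.sum_congr rfl fun x _ => by rw [relLagrangianAt_tilt hs hQ1 hQ2]; ring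

theorem lagrangian_le_relLagrangian (hs : 0 ≤ 1 + s) (hP : IsPMF P) (hW1 : IsChan1 W1)
    (hW2 : IsChan2 W2) (hQ1 : IsPMF Q1) (hQ2 : ∀ y a, IsPMF (Q2 y a))
    (hdom1 : ∀ x a, 0 < P x → 0 < W1 x a → 0 < Q1 a)
    (hdom2 : ∀ x a b, 0 < P x → 0 < W1 x a → 0 < W2 x a b → 0 < Q2 (g x) a b) :
    lagrangian P g d1 d2 s t1 t2 W1 W2 ≤ relLagrangian P g d1 d2 s t1 t2 Q1 Q2 W1 W2 := by
  rw [lagrangian, relLagrangian_eq]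
  have := mul_le_mul_of_nonneg_left (IX1_le_sum_mul_log_div hP hW1 hQ1 hdom1) hs
  have := IX2gYA_le_sum_mul_log_div hP hW1 hW2 hQ2 hdom2
  linarith

theorem lagrangian_eq_relLagrangian_pA (hP : IsPMF P) (hV1 : IsChan1 V1) (hV2 : IsChan2 V2)
    (hind : ∀ y a, 0 < pYA P g V1 y a → ∀ b, Q2s y a b = pBgYA P g V1 V2 y a b) :
    lagrangian P g d1 d2 s t1 t2 V1 V2 = relLagrangian P g d1 d2 s t1 t2 (pA P V1) Q2s V1 V2 := by
  have hIX2 : IX2gYA P g V1 V2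
      = ∑ x, ∑ a, ∑ b, P x * V1 x a * V2 x a b * log (V2 x a b / Q2s (g x) a b) :=
    Finset.sum_congr rfl fun x _ => Finset.sum_congr rfl fun a _ => Finset.sum_congr rfl
      fun b _ => mul_eq_mul_of_pos_imp (mul_nonneg (mul_nonneg (hP.1 x) ((hV1 x).1 a))
        ((hV2 x a).1 b)) fun h => by
          rw [hind _ _ ((pos_of_mul_pos_left h ((hV2 x a).1 b)).trans_le
            (mul_le_pYA hP hV1 x a))]
  rw [lagrangian, relLagrangian_eq, hIX2]
  rfl

theorem sum_log_betaInv_le (hP : IsPMF P) (hpY : ∀ y, 0 < pY P g y)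
    (hd1 : ∀ x a, 0 ≤ d1 x a) (hd2 : ∀ x b, 0 ≤ d2 x b)
    (hdual : DualOpt P g d1 d2 R1 D1 D2 s t1 t2) (hach : Achieves P g d1 d2 R1 D1 D2 V1 V2)
    (hQ2s : ∀ y a, IsPMF (Q2s y a))
    (hind : ∀ y a, 0 < pYA P g V1 y a → ∀ b, Q2s y a b = pBgYA P g V1 V2 y a b)
    (hQ1 : IsPMF Q1) (hQ2 : ∀ y a, IsPMF (Q2 y a)) :
    ∑ x, P x * log (betaInv g d1 d2 s t1 t2 Q1 Q2 x)
      ≤ ∑ x, P x * log (betaInv g d1 d2 s t1 t2 (pA P V1) Q2s x) := by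
  have hs : 0 < 1 + s := by linarith [hdual.1]
  have hV1 := hach.1
  have hV2 := hach.2.1
  have hdom1 : ∀ x a, 0 < P x → 0 < V1 x a → 0 < pA P V1 a := fun x a hx ha =>
    (mul_pos hx ha).trans_le (mul_le_pA hP hV1 x a)
  have hdom2 : ∀ x a b, 0 < P x → 0 < V1 x a → 0 < V2 x a b → 0 < Q2s (g x) a b :=
    fun x a b hx ha hb => by
      have hy := (mul_pos hx ha).trans_le (mul_le_pYA (g := g) hP hV1 x a)
      rw [hind _ _ hy b]
      exact div_pos ((mul_pos (mul_pos hx ha) hb).trans_le (mul_le_pYAB hP hV1 hV2 x a b)) hy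
  have key : -(1 + s) * ∑ x, P x * log (betaInv g d1 d2 s t1 t2 (pA P V1) Q2s x)
      ≤ -(1 + s) * ∑ x, P x * log (betaInv g d1 d2 s t1 t2 Q1 Q2 x) :=
    calc _ ≤ relLagrangian P g d1 d2 s t1 t2 (pA P V1) Q2s V1 V2 :=
          neg_sum_log_betaInv_le_relLagrangian hs hP hV1 hV2 (isPMF_pA hP hV1).1
            (fun y a => (hQ2s y a).1) hdom1 hdom2
      _ = lagrangian P g d1 d2 s t1 t2 V1 V2 :=
          (lagrangian_eq_relLagrangian_pA hP hV1 hV2 hind).symm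
      _ ≤ lagrangian P g d1 d2 s t1 t2 (tilt1 g d1 d2 s t1 t2 Q1 Q2) (tilt2 g d2 t2 Q2) :=
          lagrangian_le_of_achieves hP hpY hd1 hd2 hdual hach (isChan1_tilt1 hQ1)
            (isChan2_tilt2 hQ2)
      _ ≤ relLagrangian P g d1 d2 s t1 t2 Q1 Q2 (tilt1 g d1 d2 s t1 t2 Q1 Q2) (tilt2 g d2 t2 Q2) :=
          lagrangian_le_relLagrangian hs.le hP (isChan1_tilt1 hQ1) (isChan2_tilt2 hQ2) hQ1 hQ2
            (fun _ _ _ h => pos_of_tilt1_pos hQ1 h) fun _ _ _ _ _ h => pos_of_tilt2_pos hQ2 h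
      _ = _ := relLagrangian_tilt hs hQ1 hQ2
  rw [neg_mul, neg_mul, neg_le_neg_iff] at key
  exact le_of_mul_le_mul_left key hs

end Optimality

section FirstOrder

variable {X Y X1 X2 : Type*} [Fintype X] [Fintype Y] [Fintype X1] [Fintype X2] [DecidableEq Y]
  {P : X → ℝ} {g : X → Y} {d1 : X → X1 → ℝ} {d2 : X → X2 → ℝ} {R1 D1 D2 s t1 t2 : ℝ}
  {V1 : X → X1 → ℝ} {V2 : X → X1 → X2 → ℝ} {Q1 : X1 → ℝ} {Q2 Q2s : Y → X1 → X2 → ℝ}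

theorem betaInv_mix (Q1' : X1 → ℝ) (ε : ℝ) (x : X) :
    betaInv g d1 d2 s t1 t2 (fun a => (1 - ε) * Q1 a + ε * Q1' a) Q2 x
      = (1 - ε) * betaInv g d1 d2 s t1 t2 Q1 Q2 x + ε * betaInv g d1 d2 s t1 t2 Q1' Q2 x := by
  simp only [betaInv, add_mul, Finset.sum_add_distrib, Finset.mul_sum, mul_assoc]

theorem betaInv_indicator (a₀ : X1) (x : X) :
    betaInv g d1 d2 s t1 t2 (fun a => if a = a₀ then 1 else 0) Q2 x
      = weight1 g d1 d2 s t1 t2 Q2 x a₀ := by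
  simp [betaInv]

noncomputable def mixAt (Q2s Q2 : Y → X1 → X2 → ℝ) (a₀ : X1) (δ : ℝ) : Y → X1 → X2 → ℝ :=
  fun y a b => if a = a₀ then (1 - δ) * Q2s y a b + δ * Q2 y a b else Q2s y a b

theorem isPMF_mixAt (hQ2s : ∀ y a, IsPMF (Q2s y a)) (hQ2 : ∀ y a, IsPMF (Q2 y a)) (a₀ : X1)
    {δ : ℝ} (h0 : 0 ≤ δ) (h1 : δ ≤ 1) (y : Y) (a : X1) : IsPMF (mixAt Q2s Q2 a₀ δ y a) := by
  unfold mixAt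
  split_ifs
  exacts [(hQ2s y a).mix (hQ2 y a) h0 h1, hQ2s y a]

theorem beta2Inv_mixAt (a₀ : X1) (δ : ℝ) (x : X) :
    beta2Inv g d2 t2 (mixAt Q2s Q2 a₀ δ) x a₀
      = (1 - δ) * beta2Inv g d2 t2 Q2s x a₀ + δ * beta2Inv g d2 t2 Q2 x a₀ := by
  simp only [beta2Inv, mixAt, if_true, add_mul, Finset.sum_add_distrib, Finset.mul_sum, mul_assoc]

theorem betaInv_mixAt (a₀ : X1) (δ : ℝ) (x : X) :
    betaInv g d1 d2 s t1 t2 Q1 (mixAt Q2s Q2 a₀ δ) x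
      = betaInv g d1 d2 s t1 t2 Q1 Q2s x + Q1 a₀ *
        (weight1 g d1 d2 s t1 t2 (mixAt Q2s Q2 a₀ δ) x a₀ - weight1 g d1 d2 s t1 t2 Q2s x a₀) := by
  have hne : ∀ a ∈ univ.erase a₀, Q1 a * weight1 g d1 d2 s t1 t2 (mixAt Q2s Q2 a₀ δ) x a
      = Q1 a * weight1 g d1 d2 s t1 t2 Q2s x a := fun a ha => by
    simp [weight1, beta2Inv, mixAt, (mem_erase.1 ha).1]
  rw [betaInv, betaInv, ← add_sum_erase _ _ (mem_univ a₀), ← add_sum_erase _ _ (mem_univ a₀),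
    Finset.sum_congr rfl hne]
  ring

theorem hasDerivAt_weight1_mixAt (hQ2s : ∀ y a, IsPMF (Q2s y a)) (a₀ : X1) (x : X) :
    HasDerivAt (fun δ => weight1 g d1 d2 s t1 t2 (mixAt Q2s Q2 a₀ δ) x a₀)
      (weight1 g d1 d2 s t1 t2 Q2s x a₀ *
        ((beta2Inv g d2 t2 Q2 x a₀ - beta2Inv g d2 t2 Q2s x a₀) / beta2Inv g d2 t2 Q2s x a₀)
        / (1 + s)) 0 := by
  simp only [weight1, beta2Inv_mixAt]
  exact hasDerivAt_exp_log_mix (beta2Inv_pos hQ2s x a₀) _ _ _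

/-- The quantity maximized by `P*_{X̂₂|YX̂₁}(·|y,a)` where `P*_{YX̂₁}(y,a) = 0`. -/
noncomputable def nullObjective (P : X → ℝ) (g : X → Y) (d1 : X → X1 → ℝ) (d2 : X → X2 → ℝ)
    (s t1 t2 : ℝ) (Q1 : X1 → ℝ) (Q2s : Y → X1 → X2 → ℝ) (y : Y) (a : X1)
    (Q2 : Y → X1 → X2 → ℝ) : ℝ :=
  (∑ x, (if g x = y then P x else 0) *
    (beta d1 d2 s t1 t2 Q1 Q2s x y * exp (-(log (beta2 d2 t2 Q2 x y a)) / (1 + s)) *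
      exp (-(t1 * d1 x a) / (1 + s)))) / pY P g y

theorem sum_pY_mul_nullObjective (hpY : ∀ y, 0 < pY P g y) (a : X1) (Q2 : Y → X1 → X2 → ℝ) :
    ∑ y, pY P g y * nullObjective P g d1 d2 s t1 t2 Q1 Q2s y a Q2
      = ∑ x, P x * (weight1 g d1 d2 s t1 t2 Q2 x a / betaInv g d1 d2 s t1 t2 Q1 Q2s x) := by
  have hterm : ∀ x, beta d1 d2 s t1 t2 Q1 Q2s x (g x) *
      exp (-(log (beta2 d2 t2 Q2 x (g x) a)) / (1 + s)) * exp (-(t1 * d1 x a) / (1 + s))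
        = weight1 g d1 d2 s t1 t2 Q2 x a / betaInv g d1 d2 s t1 t2 Q1 Q2s x := fun x => by
    rw [beta_eq_inv_betaInv, log_beta2, weight1, mul_assoc, ← exp_add, inv_mul_eq_div]
    congr 2
    ring
  simp only [nullObjective, mul_div_cancel₀ _ (hpY _).ne']
  rw [Finset.sum_comm]
  simp only [sum_ite_mul_eq, hterm]

theorem sum_deriv_weight1_nonpos_of_pA_pos (hP : IsPMF P) (hpY : ∀ y, 0 < pY P g y)
    (hd1 : ∀ x a, 0 ≤ d1 x a) (hd2 : ∀ x b, 0 ≤ d2 x b)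
    (hdual : DualOpt P g d1 d2 R1 D1 D2 s t1 t2) (hach : Achieves P g d1 d2 R1 D1 D2 V1 V2)
    (hQ2s : ∀ y a, IsPMF (Q2s y a))
    (hind : ∀ y a, 0 < pYA P g V1 y a → ∀ b, Q2s y a b = pBgYA P g V1 V2 y a b)
    (hQ2 : ∀ y a, IsPMF (Q2 y a)) {a₀ : X1} (ha₀ : 0 < pA P V1 a₀) :
    ∑ x, P x * (weight1 g d1 d2 s t1 t2 Q2s x a₀ *
      ((beta2Inv g d2 t2 Q2 x a₀ - beta2Inv g d2 t2 Q2s x a₀) / beta2Inv g d2 t2 Q2s x a₀)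
        / (1 + s) / betaInv g d1 d2 s t1 t2 (pA P V1) Q2s x) ≤ 0 := by
  set u := betaInv g d1 d2 s t1 t2 (pA P V1) Q2s
  set k := fun δ x => weight1 g d1 d2 s t1 t2 (mixAt Q2s Q2 a₀ δ) x a₀
  have hpA := isPMF_pA hP hach.1
  have hu : ∀ x, 0 < u x := betaInv_pos hpA
  have hk0 : ∀ x, k 0 x = weight1 g d1 d2 s t1 t2 Q2s x a₀ := fun x => by
    simp [k, weight1, beta2Inv_mixAt]
  have hle : ∀ δ ∈ Set.Ioo (0 : ℝ) 1, ∑ x, P x * log (u x + pA P V1 a₀ * (k δ x - k 0 x))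
      ≤ ∑ x, P x * log (u x + pA P V1 a₀ * (k 0 x - k 0 x)) := fun δ hδ => by
    simpa only [sub_self, mul_zero, add_zero, hk0, betaInv_mixAt] using
      sum_log_betaInv_le hP hpY hd1 hd2 hdual hach hQ2s hind hpA
        (isPMF_mixAt hQ2s hQ2 a₀ hδ.1.le hδ.2.le)
  have hder := HasDerivAt.fun_sum (u := univ) fun x _ =>
    ((((hasDerivAt_weight1_mixAt (g := g) (d1 := d1) (s := s) (t1 := t1) (Q2 := Q2) hQ2s a₀
      x).sub_const (k 0 x)).const_mul (pA P V1 a₀)).const_add (u x)).log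
        (by change u x + pA P V1 a₀ * (k 0 x - k 0 x) ≠ 0; simpa using (hu x).ne')
      |>.const_mul (P x)
  have hc := nonpos_of_hasDerivAt_of_forall_le hder hle
  refine le_of_mul_le_mul_left (a := pA P V1 a₀) (hc.trans_eq' ?_ |>.trans_eq (mul_zero _).symm) ha₀
  rw [Finset.mul_sum]
  refine Finset.sum_congr rfl fun x _ => ?_
  change P x * (_ / (u x + _ * (k 0 x - k 0 x))) = _
  rw [sub_self, mul_zero, add_zero]
  ring

theorem sum_deriv_weight1_nonpos_of_pA_eq_zero (hP : IsPMF P) (hpY : ∀ y, 0 < pY P g y)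
    (hV1 : IsChan1 V1) (hQ2s : ∀ y a, IsPMF (Q2s y a))
    (hmax : ∀ y a, pYA P g V1 y a = 0 →
      ∀ Q2 : Y → X1 → X2 → ℝ, (∀ y' a', IsPMF (Q2 y' a')) →
        nullObjective P g d1 d2 s t1 t2 (pA P V1) Q2s y a Q2
          ≤ nullObjective P g d1 d2 s t1 t2 (pA P V1) Q2s y a Q2s)
    (hQ2 : ∀ y a, IsPMF (Q2 y a)) {a₀ : X1} (ha₀ : pA P V1 a₀ = 0) :
    ∑ x, P x * (weight1 g d1 d2 s t1 t2 Q2s x a₀ *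
      ((beta2Inv g d2 t2 Q2 x a₀ - beta2Inv g d2 t2 Q2s x a₀) / beta2Inv g d2 t2 Q2s x a₀)
        / (1 + s) / betaInv g d1 d2 s t1 t2 (pA P V1) Q2s x) ≤ 0 := by
  set u := betaInv g d1 d2 s t1 t2 (pA P V1) Q2s
  set k := fun δ x => weight1 g d1 d2 s t1 t2 (mixAt Q2s Q2 a₀ δ) x a₀
  have hk0 : ∀ x, k 0 x = weight1 g d1 d2 s t1 t2 Q2s x a₀ := fun x => by
    simp [k, weight1, beta2Inv_mixAt]
  have hnull : ∀ y, pYA P g V1 y a₀ = 0 := fun y =>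
    le_antisymm (ha₀ ▸ pYA_le_pA hP hV1 y a₀) (pYA_nonneg hP hV1 y a₀)
  have hle : ∀ δ ∈ Set.Ioo (0 : ℝ) 1, ∑ x, P x * (k δ x / u x) ≤ ∑ x, P x * (k 0 x / u x) :=
    fun δ hδ => by
      have h := Finset.sum_le_sum fun y (_ : y ∈ univ) => mul_le_mul_of_nonneg_left
        (hmax y a₀ (hnull y) _ (isPMF_mixAt hQ2s hQ2 a₀ hδ.1.le hδ.2.le)) (hpY y).le
      rw [sum_pY_mul_nullObjective hpY, sum_pY_mul_nullObjective hpY] at h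
      simpa only [hk0] using h
  have hder := HasDerivAt.fun_sum (u := univ) fun x _ =>
    ((hasDerivAt_weight1_mixAt (g := g) (d1 := d1) (d2 := d2) (s := s) (t1 := t1) (t2 := t2)
      (Q2 := Q2) hQ2s a₀ x).div_const (u x)).const_mul (P x)
  exact nonpos_of_hasDerivAt_of_forall_le hder hle

end FirstOrder

section Main

variable {X Y X1 X2 : Type*} [Fintype X] [Fintype Y] [Fintype X1] [Fintype X2] [DecidableEq Y]
  {P : X → ℝ} {g : X → Y} {d1 : X → X1 → ℝ} {d2 : X → X2 → ℝ} {R1 D1 D2 s t1 t2 : ℝ}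
  {V1 : X → X1 → ℝ} {V2 : X → X1 → X2 → ℝ} {Q1 : X1 → ℝ} {Q2 Q2s : Y → X1 → X2 → ℝ}

noncomputable def w1 (P : X → ℝ) (g : X → Y) (d1 : X → X1 → ℝ) (d2 : X → X2 → ℝ)
    (s t1 t2 : ℝ) (Q1 : X1 → ℝ) (Q2s : Y → X1 → X2 → ℝ) (a : X1) : ℝ :=
  ∑ x, ∑ y, (if g x = y then P x else 0) *
    exp ((log (beta d1 d2 s t1 t2 Q1 Q2s x y) - (1 / (1 + s)) * log (beta2 d2 t2 Q2s x y a))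
      - t1 * d1 x a / (1 + s))

noncomputable def w2 (P : X → ℝ) (g : X → Y) (d1 : X → X1 → ℝ) (d2 : X → X2 → ℝ)
    (s t1 t2 : ℝ) (Q1 : X1 → ℝ) (Q2s : Y → X1 → X2 → ℝ) (a : X1) (Q2 : Y → X1 → X2 → ℝ) : ℝ :=
  ∑ x, ∑ y, ∑ b, (if g x = y then P x else 0) * Q2 y a b *
    exp ((log (beta d1 d2 s t1 t2 Q1 Q2s x y) + (s / (1 + s)) * log (beta2 d2 t2 Q2s x y a))
      - t1 * d1 x a / (1 + s) - t2 * d2 x b)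

theorem w1_eq (hQ1 : IsPMF Q1) (a : X1) :
    w1 P g d1 d2 s t1 t2 Q1 Q2s a
      = ∑ x, P x * (weight1 g d1 d2 s t1 t2 Q2s x a / betaInv g d1 d2 s t1 t2 Q1 Q2s x) := by
  refine Finset.sum_congr rfl fun x _ => ?_
  have hB := betaInv_pos (g := g) (d1 := d1) (d2 := d2) (s := s) (t1 := t1) (t2 := t2)
    (Q2 := Q2s) hQ1 x
  rw [sum_ite_mul_eq, log_beta2, beta_eq_inv_betaInv, log_inv]
  congr 1
  rw [eq_div_iff hB.ne', weight1, ← exp_log hB, ← exp_add, log_exp]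
  congr 1
  ring

theorem w2_eq (hs : 0 < 1 + s) (hQ1 : IsPMF Q1) (hQ2s : ∀ y a, IsPMF (Q2s y a)) (a : X1)
    (Q2 : Y → X1 → X2 → ℝ) :
    w2 P g d1 d2 s t1 t2 Q1 Q2s a Q2
      = ∑ x, P x * (weight1 g d1 d2 s t1 t2 Q2s x a / betaInv g d1 d2 s t1 t2 Q1 Q2s x) *
          (beta2Inv g d2 t2 Q2 x a / beta2Inv g d2 t2 Q2s x a) := by
  refine Finset.sum_congr rfl fun x _ => ?_
  have hB := betaInv_pos (g := g) (d1 := d1) (d2 := d2) (s := s) (t1 := t1) (t2 := t2)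
    (Q2 := Q2s) hQ1 x
  have hm := beta2Inv_pos (g := g) (d2 := d2) (t2 := t2) hQ2s x a
  have hBm := mul_pos hB hm
  have hexp : ∀ b, exp ((log (beta d1 d2 s t1 t2 Q1 Q2s x (g x))
      + (s / (1 + s)) * log (beta2 d2 t2 Q2s x (g x) a)) - t1 * d1 x a / (1 + s) - t2 * d2 x b)
        = exp (-(t2 * d2 x b)) * weight1 g d1 d2 s t1 t2 Q2s x a
          / (betaInv g d1 d2 s t1 t2 Q1 Q2s x * beta2Inv g d2 t2 Q2s x a) := fun b => by
    rw [log_beta2, beta_eq_inv_betaInv, log_inv, weight1, ← exp_add, eq_div_iff hBm.ne',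
      ← exp_log hBm, ← exp_add, log_mul hB.ne' hm.ne']
    congr 1
    field_simp
    ring
  simp only [ite_mul, zero_mul, Finset.sum_ite_irrel, Finset.sum_const_zero, Finset.sum_ite_eq,
    Finset.mem_univ, if_true, hexp]
  rw [show beta2Inv g d2 t2 Q2 x a = ∑ b, Q2 (g x) a b * exp (-(t2 * d2 x b)) from rfl,
    Finset.sum_div, Finset.mul_sum]
  refine Finset.sum_congr rfl fun b _ => ?_
  field_simp

theorem w1_le_one (hP : IsPMF P) (hpY : ∀ y, 0 < pY P g y)
    (hd1 : ∀ x a, 0 ≤ d1 x a) (hd2 : ∀ x b, 0 ≤ d2 x b)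
    (hdual : DualOpt P g d1 d2 R1 D1 D2 s t1 t2) (hach : Achieves P g d1 d2 R1 D1 D2 V1 V2)
    (hQ2s : ∀ y a, IsPMF (Q2s y a))
    (hind : ∀ y a, 0 < pYA P g V1 y a → ∀ b, Q2s y a b = pBgYA P g V1 V2 y a b) (a₀ : X1) :
    w1 P g d1 d2 s t1 t2 (pA P V1) Q2s a₀ ≤ 1 := by
  have hpA := isPMF_pA hP hach.1
  rw [w1_eq hpA]
  set u := betaInv g d1 d2 s t1 t2 (pA P V1) Q2s
  set e := fun x => weight1 g d1 d2 s t1 t2 Q2s x a₀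
  have hu : ∀ x, 0 < u x := betaInv_pos hpA
  have hδ : IsPMF fun a => if a = a₀ then (1 : ℝ) else 0 :=
    ⟨fun a => by dsimp only; split_ifs <;> norm_num, by simp⟩
  have hle : ∀ ε ∈ Set.Ioo (0 : ℝ) 1, ∑ x, P x * log ((1 - ε) * u x + ε * e x)
      ≤ ∑ x, P x * log ((1 - 0) * u x + 0 * e x) := fun ε hε => by
    simpa only [betaInv_mix, betaInv_indicator, sub_zero, one_mul, zero_mul, add_zero] using
      sum_log_betaInv_le hP hpY hd1 hd2 hdual hach hQ2s hind (hpA.mix hδ hε.1.le hε.2.le) hQ2s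
  have hder := HasDerivAt.fun_sum (u := univ) fun x _ =>
    (hasDerivAt_log_mix (hu x) (e x)).const_mul (P x)
  have hc := nonpos_of_hasDerivAt_of_forall_le hder hle
  have hsub : ∑ x, P x * ((e x - u x) / u x) = ∑ x, P x * (e x / u x) - 1 := by
    rw [← hP.2, ← Finset.sum_sub_distrib]
    exact Finset.sum_congr rfl fun x _ => by field_simp [(hu x).ne']
  linarith

theorem w2_le_w1 (hP : IsPMF P) (hpY : ∀ y, 0 < pY P g y)
    (hd1 : ∀ x a, 0 ≤ d1 x a) (hd2 : ∀ x b, 0 ≤ d2 x b)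
    (hdual : DualOpt P g d1 d2 R1 D1 D2 s t1 t2) (hach : Achieves P g d1 d2 R1 D1 D2 V1 V2)
    (hQ2s : ∀ y a, IsPMF (Q2s y a))
    (hind : ∀ y a, 0 < pYA P g V1 y a → ∀ b, Q2s y a b = pBgYA P g V1 V2 y a b)
    (hmax : ∀ y a, pYA P g V1 y a = 0 →
      ∀ Q2 : Y → X1 → X2 → ℝ, (∀ y' a', IsPMF (Q2 y' a')) →
        nullObjective P g d1 d2 s t1 t2 (pA P V1) Q2s y a Q2
          ≤ nullObjective P g d1 d2 s t1 t2 (pA P V1) Q2s y a Q2s)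
    (a₀ : X1) (hQ2 : ∀ y a, IsPMF (Q2 y a)) :
    w2 P g d1 d2 s t1 t2 (pA P V1) Q2s a₀ Q2 ≤ w1 P g d1 d2 s t1 t2 (pA P V1) Q2s a₀ := by
  have hs : 0 < 1 + s := by linarith [hdual.1]
  have hpA := isPMF_pA hP hach.1
  rw [w2_eq hs hpA hQ2s, w1_eq hpA]
  set u := betaInv g d1 d2 s t1 t2 (pA P V1) Q2s
  set e := fun x => weight1 g d1 d2 s t1 t2 Q2s x a₀
  set m := fun x => beta2Inv g d2 t2 Q2s x a₀
  set v := fun x => beta2Inv g d2 t2 Q2 x a₀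
  have hu : ∀ x, 0 < u x := betaInv_pos hpA
  have hm : ∀ x, 0 < m x := fun x => beta2Inv_pos hQ2s x a₀
  have hfo : ∑ x, P x * (e x * ((v x - m x) / m x) / (1 + s) / u x) ≤ 0 := by
    rcases (hpA.1 a₀).eq_or_lt with h | h
    · exact sum_deriv_weight1_nonpos_of_pA_eq_zero hP hpY hach.1 hQ2s hmax hQ2 h.symm
    · exact sum_deriv_weight1_nonpos_of_pA_pos hP hpY hd1 hd2 hdual hach hQ2s hind hQ2 h
  have hsub : ∑ x, P x * (e x / u x) * (v x / m x) - ∑ x, P x * (e x / u x)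
      = (1 + s) * ∑ x, P x * (e x * ((v x - m x) / m x) / (1 + s) / u x) := by
    rw [← Finset.sum_sub_distrib, Finset.mul_sum]
    exact Finset.sum_congr rfl fun x _ => by field_simp [(hu x).ne', (hm x).ne']
  nlinarith [mul_nonpos_of_nonneg_of_nonpos hs.le hfo]

end Main

/-- Lemma 7 of the paper: for an optimal test-channel pair for
`𝖱_FY(R₁,D₁,D₂|P_X)`, with the induced conditional `P*_{X̂₂|YX̂₁}` chosen on null sets
according to the maximization rule, one has `w₂(x̂₁,Q) ≤ w₁(x̂₁) ≤ 1`. -/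
theorem w_le_one_fy
    {X Y X1 X2 : Type*} [Fintype X] [Fintype Y] [Fintype X1] [Fintype X2] [DecidableEq Y]
    (P : X → ℝ) (g : X → Y) (d1 : X → X1 → ℝ) (d2 : X → X2 → ℝ)
    (R1 D1 D2 s t1 t2 : ℝ)
    (hP : IsPMF P) (hpY : ∀ y, 0 < pY P g y)
    (hd1 : ∀ x a, 0 ≤ d1 x a) (hd2 : ∀ x b, 0 ≤ d2 x b)
    (hdual : DualOpt P g d1 d2 R1 D1 D2 s t1 t2)
    -- a pair of test channels achieving `𝖱_FY(R₁,D₁,D₂|P_X)`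
    (V1 : X → X1 → ℝ) (V2 : X → X1 → X2 → ℝ)
    (hach : Achieves P g d1 d2 R1 D1 D2 V1 V2)
    -- the version `Q2s` of `P*_{X̂₂|YX̂₁}` with the null-set maximization rule
    (Q2s : Y → X1 → X2 → ℝ) (hQ2s : ∀ y a, IsPMF (Q2s y a))
    (hind : ∀ y a, 0 < pYA P g V1 y a → ∀ b, Q2s y a b = pBgYA P g V1 V2 y a b)
    (hmax : ∀ y a, pYA P g V1 y a = 0 →
      ∀ Q2 : Y → X1 → X2 → ℝ, (∀ y' a', IsPMF (Q2 y' a')) →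
        (∑ x, (if g x = y then P x else 0) *
            (beta d1 d2 s t1 t2 (pA P V1) Q2s x y *
              Real.exp (-(Real.log (beta2 d2 t2 Q2 x y a)) / (1 + s)) *
              Real.exp (-(t1 * d1 x a) / (1 + s)))) / pY P g y
        ≤ (∑ x, (if g x = y then P x else 0) *
            (beta d1 d2 s t1 t2 (pA P V1) Q2s x y *
              Real.exp (-(Real.log (beta2 d2 t2 Q2s x y a)) / (1 + s)) *
              Real.exp (-(t1 * d1 x a) / (1 + s)))) / pY P g y) :
    ∀ a : X1, ∀ Q2 : Y → X1 → X2 → ℝ, (∀ y' a', IsPMF (Q2 y' a')) →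
      -- w₂(x̂₁, Q_{X̂₂|YX̂₁}) ≤ w₁(x̂₁) ≤ 1
      (∑ x, ∑ y, ∑ b, (if g x = y then P x else 0) * Q2 y a b *
          Real.exp ((Real.log (beta d1 d2 s t1 t2 (pA P V1) Q2s x y)
              + (s / (1 + s)) * Real.log (beta2 d2 t2 Q2s x y a))
            - t1 * d1 x a / (1 + s) - t2 * d2 x b))
        ≤ (∑ x, ∑ y, (if g x = y then P x else 0) *
            Real.exp ((Real.log (beta d1 d2 s t1 t2 (pA P V1) Q2s x y)
                - (1 / (1 + s)) * Real.log (beta2 d2 t2 Q2s x y a))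
              - t1 * d1 x a / (1 + s)))
      ∧ (∑ x, ∑ y, (if g x = y then P x else 0) *
            Real.exp ((Real.log (beta d1 d2 s t1 t2 (pA P V1) Q2s x y)
                - (1 / (1 + s)) * Real.log (beta2 d2 t2 Q2s x y a))
              - t1 * d1 x a / (1 + s))) ≤ 1 := by
  intro a Q2 hQ2
  exact ⟨w2_le_w1 hP hpY hd1 hd2 hdual hach hQ2s hind hmax a hQ2,
    w1_le_one hP hpY hd1 hd2 hdual hach hQ2s hind a⟩

end FY
end
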